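/- arXiv:2403.01372 — 11 statements merged into one kernel-verified Lean document; each statement's English description precedes it below -/
import Mathlib

section
/- For all (u,v) ∈ (a,b) × ℝ, the Euclidean gradient of Φ at η(u,v) satisfies (grad Φ)(η(u,v)) = φ(u,v) · (X_u(u,v) × X_v(u,v)), where φ(u,v) = 2m / (α(u) · A(u)^{(2m−1)/(2m)}) > 0 and × denotes the Euclidean cross product in ℝ³. In particular η(u,v) is Birkhoff orthogonal to the tangent plane of the rotational surface X at (u,v), i.e., η is the Birkhoff–Gauss map of the surface. -/
open Real Set

/-- `Φ(x₁,x₂,x₃) = (x₁² + x₂²)^m + x₃^{2m}`. -/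
noncomputable def Phi (m : ℕ) (x : ℝ × ℝ × ℝ) : ℝ :=
  (x.1 ^ 2 + x.2.1 ^ 2) ^ m + x.2.2 ^ (2 * m)

/-- The Euclidean gradient of `Φ`. -/
noncomputable def gradPhi (m : ℕ) (x : ℝ × ℝ × ℝ) : ℝ × ℝ × ℝ :=
  (fderiv ℝ (Phi m) x (1, 0, 0), fderiv ℝ (Phi m) x (0, 1, 0), fderiv ℝ (Phi m) x (0, 0, 1))

/-- The Euclidean cross product in `ℝ³`. -/
def cross (a b : ℝ × ℝ × ℝ) : ℝ × ℝ × ℝ :=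
  (a.2.1 * b.2.2 - a.2.2 * b.2.1, a.2.2 * b.1 - a.1 * b.2.2, a.1 * b.2.1 - a.2.1 * b.1)

/-!
Write `η(u,v) = c • (-P cos v, -P sin v, Q)` with `c = A^{-1/(2m)}`, `P = β'^{1/(2m-1)}`,
`Q = α'^{1/(2m-1)}`. At such a point `x₁² + x₂² = (cP)²`, so `∇Φ(η) = 2m ((cP)^{2m-1}(-cos v, -sin v),
(cQ)^{2m-1})`, and the exponents in `η` are exactly those making `(cP)^{2m-1} = β' / A^{(2m-1)/(2m)}`
and `(cQ)^{2m-1} = α' / A^{(2m-1)/(2m)}`. On the other side `X_u × X_v = α (-β' cos v, -β' sin v, α')`.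
-/

theorem gradPhi_eq (m : ℕ) (x : ℝ × ℝ × ℝ) :
    gradPhi m x =
      (2 * m * x.1 * (x.1 ^ 2 + x.2.1 ^ 2) ^ (m - 1),
        2 * m * x.2.1 * (x.1 ^ 2 + x.2.1 ^ 2) ^ (m - 1),
        2 * m * x.2.2 ^ (2 * m - 1)) := by
  have hx₂ : HasFDerivAt (fun y : ℝ × ℝ × ℝ => y.2.1) _ x :=
    (hasFDerivAt_fst (𝕜 := ℝ)).comp x (hasFDerivAt_snd (𝕜 := ℝ))
  have hx₃ : HasFDerivAt (fun y : ℝ × ℝ × ℝ => y.2.2) _ x :=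
    (hasFDerivAt_snd (𝕜 := ℝ)).comp x (hasFDerivAt_snd (𝕜 := ℝ))
  have hPhi : HasFDerivAt (Phi m) _ x :=
    (((hasFDerivAt_fst.pow 2).add (hx₂.pow 2)).pow m).add (hx₃.pow (2 * m))
  simp only [gradPhi, hPhi.fderiv, Pi.add_apply, add_apply, smul_apply,
    ContinuousLinearMap.comp_apply, ContinuousLinearMap.coe_fst', ContinuousLinearMap.coe_snd',
    nsmul_eq_mul, smul_eq_mul, Prod.mk.injEq]
  push_cast
  refine ⟨by ring, by ring, by ring⟩

theorem gradPhi_neg_polar {m : ℕ} (hm : 1 ≤ m) (p q v : ℝ) :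
    gradPhi m (-p * cos v, -p * sin v, q) =
      (2 * m : ℝ) • (-p ^ (2 * m - 1) * cos v, -p ^ (2 * m - 1) * sin v, q ^ (2 * m - 1)) := by
  have hr : (-p * cos v) ^ 2 + (-p * sin v) ^ 2 = p ^ 2 := by
    linear_combination p ^ 2 * sin_sq_add_cos_sq v
  have hodd : p ^ (2 * m - 1) = p * (p ^ 2) ^ (m - 1) := by
    rw [← pow_mul, ← pow_succ']; congr 1; omega
  rw [gradPhi_eq, hr, hodd]
  simp only [Prod.smul_mk, smul_eq_mul]
  refine Prod.ext ?_ (Prod.ext ?_ ?_) <;> dsimp only <;> ring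

theorem rpow_neg_inv_mul_rpow_inv_pow {n : ℕ} {s c y : ℝ} (hn : n ≠ 0) (hs : (n : ℝ) = s - 1)
    (hc : 0 < c) (hy : 0 ≤ y) :
    (c ^ (-1 / s) * y ^ (1 / (s - 1))) ^ n = y / c ^ ((s - 1) / s) := by
  rw [← hs, mul_pow, one_div, Real.rpow_inv_natCast_pow hy hn, ← Real.rpow_mul_natCast hc.le,
    div_mul_eq_mul_div, neg_one_mul, neg_div, Real.rpow_neg hc.le, ← div_eq_inv_mul]

theorem deriv_revolution_fst {α β : ℝ → ℝ} {u : ℝ} (hα : DifferentiableAt ℝ α u)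
    (hβ : DifferentiableAt ℝ β u) (v : ℝ) :
    deriv (fun t => (α t * cos v, α t * sin v, β t)) u =
      (deriv α u * cos v, deriv α u * sin v, deriv β u) :=
  ((hα.hasDerivAt.mul_const _).prodMk ((hα.hasDerivAt.mul_const _).prodMk hβ.hasDerivAt)).deriv

theorem deriv_revolution_snd (r z v : ℝ) :
    deriv (fun t => (r * cos t, r * sin t, z)) v = (r * -sin v, r * cos v, 0) :=
  (((hasDerivAt_cos v).const_mul r).prodMk
    (((hasDerivAt_sin v).const_mul r).prodMk (hasDerivAt_const v z))).deriv

theorem cross_revolution (a b r v : ℝ) :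
    cross (a * cos v, a * sin v, b) (r * -sin v, r * cos v, 0) =
      r • (-b * cos v, -b * sin v, a) := by
  simp only [cross, Prod.smul_mk, smul_eq_mul]
  refine Prod.ext ?_ (Prod.ext ?_ ?_) <;> dsimp only
  · ring
  · ring
  · linear_combination a * r * sin_sq_add_cos_sq v

theorem gradPhi_eta_eq_smul_cross_general (m : ℕ) (hm : 2 ≤ m) (a b : ℝ) (α β : ℝ → ℝ)
    (hαpos : ∀ u ∈ Set.Ioo a b, 0 < α u)
    (hα' : ∀ u ∈ Set.Ioo a b, 0 < deriv α u)
    (hβ' : ∀ u ∈ Set.Ioo a b, 0 < deriv β u)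
    (X : ℝ → ℝ → ℝ × ℝ × ℝ)
    (hX : ∀ u v, X u v = (α u * Real.cos v, α u * Real.sin v, β u))
    (Xu Xv : ℝ → ℝ → ℝ × ℝ × ℝ)
    (hXu : ∀ u v, Xu u v = deriv (fun t => X t v) u)
    (hXv : ∀ u v, Xv u v = deriv (fun t => X u t) v)
    (A : ℝ → ℝ)
    (hA : ∀ u, A u =
      deriv α u ^ ((2 * (m : ℝ)) / (2 * (m : ℝ) - 1)) +
      deriv β u ^ ((2 * (m : ℝ)) / (2 * (m : ℝ) - 1)))
    (η : ℝ → ℝ → ℝ × ℝ × ℝ)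
    (hη : ∀ u v, η u v =
      (A u ^ (-(1 : ℝ) / (2 * (m : ℝ))) *
          (-(deriv β u ^ ((1 : ℝ) / (2 * (m : ℝ) - 1))) * Real.cos v),
        A u ^ (-(1 : ℝ) / (2 * (m : ℝ))) *
          (-(deriv β u ^ ((1 : ℝ) / (2 * (m : ℝ) - 1))) * Real.sin v),
        A u ^ (-(1 : ℝ) / (2 * (m : ℝ))) *
          deriv α u ^ ((1 : ℝ) / (2 * (m : ℝ) - 1))))
    (φ : ℝ → ℝ → ℝ)
    (hφ : ∀ u v, φ u v = 2 * (m : ℝ) / (α u * A u ^ ((2 * (m : ℝ) - 1) / (2 * (m : ℝ))))) :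
    ∀ u ∈ Set.Ioo a b, ∀ v : ℝ,
      gradPhi m (η u v) = φ u v • cross (Xu u v) (Xv u v) ∧ 0 < φ u v := by
  intro u hu v
  have hαu := hαpos u hu
  have hα'u := hα' u hu
  have hβ'u := hβ' u hu
  have hA_pos : 0 < A u := hA u ▸ add_pos (rpow_pos_of_pos hα'u _) (rpow_pos_of_pos hβ'u _)
  have hφuv := hφ u v
  set E := A u ^ ((2 * (m : ℝ) - 1) / (2 * (m : ℝ)))
  have hE : 0 < E := rpow_pos_of_pos hA_pos _
  have hcross : cross (Xu u v) (Xv u v) =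
      α u • (-deriv β u * cos v, -deriv β u * sin v, deriv α u) := by
    simp only [hXu, hXv, hX]
    rw [deriv_revolution_fst (differentiableAt_of_deriv_ne_zero hα'u.ne')
      (differentiableAt_of_deriv_ne_zero hβ'u.ne'), deriv_revolution_snd, cross_revolution]
  set c := A u ^ (-(1 : ℝ) / (2 * (m : ℝ)))
  have hη' : η u v = (-(c * deriv β u ^ ((1 : ℝ) / (2 * (m : ℝ) - 1))) * cos v,
      -(c * deriv β u ^ ((1 : ℝ) / (2 * (m : ℝ) - 1))) * sin v,
      c * deriv α u ^ ((1 : ℝ) / (2 * (m : ℝ) - 1))) := by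
    simp only [hη, Prod.mk.injEq]
    exact ⟨by ring, by ring, rfl⟩
  have hpow : ∀ y, 0 < y → (c * y ^ ((1 : ℝ) / (2 * (m : ℝ) - 1))) ^ (2 * m - 1) = y / E :=
    fun y hy => rpow_neg_inv_mul_rpow_inv_pow (by omega)
      (by rw [Nat.cast_sub (by omega)]; push_cast; ring) hA_pos hy.le
  have hφ_pos : 0 < φ u v := hφuv ▸ div_pos (by positivity) (mul_pos hαu hE)
  refine ⟨?_, hφ_pos⟩
  have hφα : φ u v * α u = 2 * m / E := by rw [hφuv]; field_simp
  rw [hη', gradPhi_neg_polar (by omega), hpow _ hβ'u, hpow _ hα'u, hcross, smul_smul, hφα]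
  simp only [Prod.smul_mk, smul_eq_mul, Prod.mk.injEq]
  exact ⟨by ring, by ring, by ring⟩

/-- The gradient of `Φ` at `η(u,v)` is the positive multiple
`φ(u,v) = 2m / (α(u) A(u)^{(2m−1)/(2m)})` of `X_u × X_v`; hence `η(u,v)` is Birkhoff
orthogonal to the tangent plane of the rotational surface, i.e. `η` is its
Birkhoff–Gauss map. -/
theorem gradPhi_eta_eq_smul_cross (m : ℕ) (hm : 2 ≤ m) (a b : ℝ) (α β : ℝ → ℝ)
    (hα : ContDiffOn ℝ 2 α (Set.Ioo a b)) (hβ : ContDiffOn ℝ 2 β (Set.Ioo a b))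
    (hαpos : ∀ u ∈ Set.Ioo a b, 0 < α u)
    (hα' : ∀ u ∈ Set.Ioo a b, 0 < deriv α u)
    (hβ' : ∀ u ∈ Set.Ioo a b, 0 < deriv β u)
    (X : ℝ → ℝ → ℝ × ℝ × ℝ)
    (hX : ∀ u v, X u v = (α u * Real.cos v, α u * Real.sin v, β u))
    (Xu Xv : ℝ → ℝ → ℝ × ℝ × ℝ)
    (hXu : ∀ u v, Xu u v = deriv (fun t => X t v) u)
    (hXv : ∀ u v, Xv u v = deriv (fun t => X u t) v)
    (A : ℝ → ℝ)
    (hA : ∀ u, A u =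
      deriv α u ^ ((2 * (m : ℝ)) / (2 * (m : ℝ) - 1)) +
      deriv β u ^ ((2 * (m : ℝ)) / (2 * (m : ℝ) - 1)))
    (η : ℝ → ℝ → ℝ × ℝ × ℝ)
    (hη : ∀ u v, η u v =
      (A u ^ (-(1 : ℝ) / (2 * (m : ℝ))) *
          (-(deriv β u ^ ((1 : ℝ) / (2 * (m : ℝ) - 1))) * Real.cos v),
        A u ^ (-(1 : ℝ) / (2 * (m : ℝ))) *
          (-(deriv β u ^ ((1 : ℝ) / (2 * (m : ℝ) - 1))) * Real.sin v),
        A u ^ (-(1 : ℝ) / (2 * (m : ℝ))) *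
          deriv α u ^ ((1 : ℝ) / (2 * (m : ℝ) - 1))))
    (φ : ℝ → ℝ → ℝ)
    (hφ : ∀ u v, φ u v = 2 * (m : ℝ) / (α u * A u ^ ((2 * (m : ℝ) - 1) / (2 * (m : ℝ))))) :
    ∀ u ∈ Set.Ioo a b, ∀ v : ℝ,
      gradPhi m (η u v) = φ u v • cross (Xu u v) (Xv u v) ∧ 0 < φ u v :=
  gradPhi_eta_eq_smul_cross_general m hm a b α β hαpos hα' hβ' X hX Xu Xv hXu hXv A hA η hη φ hφ
end

section
/- The partial derivatives of η satisfy η_u(u,v) = k₁(u) · X_u(u,v) and η_v(u,v) = k₂(u) · X_v(u,v) for all (u,v), where k₁(u) = −(1/(2m−1)) · A(u)^{−(2m+1)/(2m)} · α'(u)^{−(2m−2)/(2m−1)} · β'(u)^{−(2m−2)/(2m−1)} · (α'(u)β''(u) − α''(u)β'(u)) and k₂(u) = −(1/α(u)) · A(u)^{−1/(2m)} · β'(u)^{1/(2m−1)}. In particular X_u and X_v are eigenvectors of the differential of the Birkhoff–Gauss map with eigenvalues (principal curvatures) k₁ and k₂. -/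
/-!
Both the surface and its Birkhoff–Gauss map are surfaces of revolution: with `r = 2m`, `X`
revolves the profile `(α, β)` and `η` revolves the planar curve
`n = A ^ (-1/r) • (-β' ^ (1/(r-1)), α' ^ (1/(r-1)))`, the `ℓ^r`-unit normal of the profile.
Revolving by a fixed angle is linear, so `η_u = k₁ X_u` reduces to the planar identity
`n' = k₁ (α', β')`, a computation with real powers in which
`A = α' · α' ^ (1/(r-1)) + β' · β' ^ (1/(r-1))` is the only relation needed. In the angle
direction both `X_v` and `η_v` are their radius times `(-sin v, cos v, 0)`, and the radius `n₁`
of `η` equals `k₂ α`.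
-/

open Real Set

theorem ContDiffOn.hasDerivAt_deriv {𝕜 F : Type*} [NontriviallyNormedField 𝕜]
    [NormedAddCommGroup F] [NormedSpace 𝕜 F] {f : 𝕜 → F} {s : Set 𝕜} {x : 𝕜}
    (hf : ContDiffOn 𝕜 2 f s) (hs : IsOpen s) (hx : x ∈ s) :
    HasDerivAt (deriv f) (deriv (deriv f) x) x :=
  (((hf.deriv_of_isOpen hs (m := 1) (by norm_num)).differentiableOn one_ne_zero).differentiableAt
    (hs.mem_nhds hx)).hasDerivAt

noncomputable def revolve (v : ℝ) : ℝ × ℝ →L[ℝ] ℝ × ℝ × ℝ :=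
  (cos v • ContinuousLinearMap.fst ℝ ℝ ℝ).prod
    ((sin v • ContinuousLinearMap.fst ℝ ℝ ℝ).prod (ContinuousLinearMap.snd ℝ ℝ ℝ))

@[simp]
theorem revolve_apply (v : ℝ) (w : ℝ × ℝ) :
    revolve v w = (w.1 * cos v, w.1 * sin v, w.2) := by
  simp [revolve, mul_comm]

theorem hasDerivAt_revolve_angle (w : ℝ × ℝ) (v : ℝ) :
    HasDerivAt (fun t => revolve t w) (w.1 • (-sin v, cos v, (0 : ℝ))) v := by
  simp only [revolve_apply]
  convert ((hasDerivAt_cos v).const_mul w.1).prodMk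
    (((hasDerivAt_sin v).const_mul w.1).prodMk (hasDerivAt_const v w.2)) using 1
  simp

-- The point of the unit circle of the `ℓ^r` norm at which the tangent is parallel to `(x, y)`.
noncomputable def birkhoffNormal (r x y : ℝ) : ℝ × ℝ :=
  (x ^ (r / (r - 1)) + y ^ (r / (r - 1))) ^ (-1 / r) • (-(y ^ (1 / (r - 1))), x ^ (1 / (r - 1)))

noncomputable def meridianCurvature (r x y x' y' : ℝ) : ℝ :=
  -(1 / (r - 1)) * (x ^ (r / (r - 1)) + y ^ (r / (r - 1))) ^ (-(r + 1) / r) *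
    x ^ (-(r - 2) / (r - 1)) * y ^ (-(r - 2) / (r - 1)) * (x * y' - x' * y)

theorem HasDerivAt.birkhoffNormal {r : ℝ} (hr : 1 < r) {x y : ℝ → ℝ} {x' y' t : ℝ}
    (hx : HasDerivAt x x' t) (hy : HasDerivAt y y' t) (hx0 : 0 < x t) (hy0 : 0 < y t) :
    HasDerivAt (fun s => birkhoffNormal r (x s) (y s))
      (meridianCurvature r (x t) (y t) x' y' • (x t, y t)) t := by
  have hr1 : r - 1 ≠ 0 := by linarith
  have hr0 : r ≠ 0 := by linarith
  have hq : r / (r - 1) = 1 / (r - 1) + 1 := by field_simp; ring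
  have hs : -(r + 1) / r = -1 / r - 1 := by field_simp; ring
  have hp : -(r - 2) / (r - 1) = 1 / (r - 1) - 1 := by field_simp; ring
  simp only [_root_.birkhoffNormal, meridianCurvature, hq, hs, hp]
  have hA := (hx.rpow_const (p := 1 / (r - 1) + 1) (.inl hx0.ne')).add
    (hy.rpow_const (p := 1 / (r - 1) + 1) (.inl hy0.ne'))
  have hApos : 0 < x t ^ (1 / (r - 1) + 1) + y t ^ (1 / (r - 1) + 1) := by positivity
  refine ((hA.rpow_const (p := -1 / r) (.inl hApos.ne')).smul
    ((hy.rpow_const (p := 1 / (r - 1)) (.inl hy0.ne')).neg.prodMk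
      (hx.rpow_const (p := 1 / (r - 1)) (.inl hx0.ne')))).congr_deriv ?_
  simp only [Pi.add_apply, Pi.neg_apply, add_sub_cancel_right, rpow_sub_one hApos.ne',
    rpow_sub_one hx0.ne', rpow_sub_one hy0.ne']
  -- With `X = x ^ (1 / (r - 1))`, `Y = y ^ (1 / (r - 1))` we have `A = x X + y Y`, and what
  -- is left is a rational identity in `x, y, X, Y` and `S = A ^ (-1 / r)`.
  rw [rpow_add_one hx0.ne', rpow_add_one hy0.ne'] at hApos ⊢
  generalize (x t ^ (1 / (r - 1)) * x t + y t ^ (1 / (r - 1)) * y t) ^ (-1 / r) = S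
  have := rpow_pos_of_pos hx0 (1 / (r - 1))
  have := rpow_pos_of_pos hy0 (1 / (r - 1))
  generalize x t ^ (1 / (r - 1)) = X at *
  generalize y t ^ (1 / (r - 1)) = Y at *
  ext <;> simp only [Prod.smul_mk, Prod.fst_add, Prod.snd_add, smul_eq_mul] <;> field_simp <;> ring

/-- The partial derivatives of the Birkhoff–Gauss map `η` satisfy
`η_u = k₁ · X_u` and `η_v = k₂ · X_v`, where `k₁`, `k₂` are the principal curvatures
of the rotational surface. -/
theorem eta_partials_eq_principal_curvatures (m : ℕ) (hm : 2 ≤ m) (a b : ℝ) (α β : ℝ → ℝ)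
    (hα : ContDiffOn ℝ 2 α (Set.Ioo a b)) (hβ : ContDiffOn ℝ 2 β (Set.Ioo a b))
    (hαpos : ∀ u ∈ Set.Ioo a b, 0 < α u)
    (hα' : ∀ u ∈ Set.Ioo a b, 0 < deriv α u)
    (hβ' : ∀ u ∈ Set.Ioo a b, 0 < deriv β u)
    (X : ℝ → ℝ → ℝ × ℝ × ℝ)
    (hX : ∀ u v, X u v = (α u * Real.cos v, α u * Real.sin v, β u))
    (Xu Xv : ℝ → ℝ → ℝ × ℝ × ℝ)
    (hXu : ∀ u v, Xu u v = deriv (fun t => X t v) u)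
    (hXv : ∀ u v, Xv u v = deriv (fun t => X u t) v)
    (A : ℝ → ℝ)
    (hA : ∀ u, A u =
      deriv α u ^ ((2 * (m : ℝ)) / (2 * (m : ℝ) - 1)) +
      deriv β u ^ ((2 * (m : ℝ)) / (2 * (m : ℝ) - 1)))
    (η : ℝ → ℝ → ℝ × ℝ × ℝ)
    (hη : ∀ u v, η u v =
      (A u ^ (-(1 : ℝ) / (2 * (m : ℝ))) *
          (-(deriv β u ^ ((1 : ℝ) / (2 * (m : ℝ) - 1))) * Real.cos v),
        A u ^ (-(1 : ℝ) / (2 * (m : ℝ))) *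
          (-(deriv β u ^ ((1 : ℝ) / (2 * (m : ℝ) - 1))) * Real.sin v),
        A u ^ (-(1 : ℝ) / (2 * (m : ℝ))) *
          deriv α u ^ ((1 : ℝ) / (2 * (m : ℝ) - 1))))
    (k₁ k₂ : ℝ → ℝ)
    (hk₁ : ∀ u, k₁ u =
      -(1 / (2 * (m : ℝ) - 1)) * A u ^ (-(2 * (m : ℝ) + 1) / (2 * (m : ℝ))) *
        deriv α u ^ (-(2 * (m : ℝ) - 2) / (2 * (m : ℝ) - 1)) *
        deriv β u ^ (-(2 * (m : ℝ) - 2) / (2 * (m : ℝ) - 1)) *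
        (deriv α u * deriv (deriv β) u - deriv (deriv α) u * deriv β u))
    (hk₂ : ∀ u, k₂ u =
      -(1 / α u) * A u ^ (-(1 : ℝ) / (2 * (m : ℝ))) *
        deriv β u ^ ((1 : ℝ) / (2 * (m : ℝ) - 1))) :
    ∀ u ∈ Set.Ioo a b, ∀ v : ℝ,
      deriv (fun t => η t v) u = k₁ u • Xu u v ∧
      deriv (fun t => η u t) v = k₂ u • Xv u v := by
  intro u hu v
  have hr : 1 < 2 * (m : ℝ) := by
    have : (2 : ℝ) ≤ m := by exact_mod_cast hm
    linarith
  have hmem := isOpen_Ioo.mem_nhds hu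
  have hdα := ((hα.differentiableOn two_ne_zero).differentiableAt hmem).hasDerivAt
  have hdβ := ((hβ.differentiableOn two_ne_zero).differentiableAt hmem).hasDerivAt
  have hX_rev : ∀ t w, X t w = revolve w (α t, β t) := fun t w => by simp [hX]
  have hη_rev : ∀ t w, η t w = revolve w (birkhoffNormal (2 * m) (deriv α t) (deriv β t)) :=
    fun t w => by simp [hη, hA, birkhoffNormal, mul_assoc]
  constructor
  · have hk : k₁ u = meridianCurvature (2 * m) (deriv α u) (deriv β u)
        (deriv (deriv α) u) (deriv (deriv β) u) := by
      rw [hk₁, hA]; rfl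
    have hη_u :
        HasDerivAt (fun t => η t v) (revolve v (k₁ u • (deriv α u, deriv β u))) u := by
      simp only [hη_rev, hk]
      exact (revolve v).hasFDerivAt.comp_hasDerivAt u
        ((hα.hasDerivAt_deriv isOpen_Ioo hu).birkhoffNormal hr (hβ.hasDerivAt_deriv isOpen_Ioo hu)
          (hα' u hu) (hβ' u hu))
    have hX_u : HasDerivAt (fun t => X t v) (revolve v (deriv α u, deriv β u)) u := by
      simp only [hX_rev]
      exact (revolve v).hasFDerivAt.comp_hasDerivAt u (hdα.prodMk hdβ)
    rw [hη_u.deriv, hXu, hX_u.deriv, map_smul]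
  · have hk : k₂ u * α u = (birkhoffNormal (2 * m) (deriv α u) (deriv β u)).1 := by
      have := (hαpos u hu).ne'
      simp only [hk₂, hA, birkhoffNormal, Prod.smul_fst, smul_eq_mul]
      field_simp
    have hη_v :
        HasDerivAt (fun t => η u t) ((k₂ u * α u) • (-sin v, cos v, (0 : ℝ))) v := by
      simp only [hη_rev, hk]
      exact hasDerivAt_revolve_angle _ v
    have hX_v : HasDerivAt (fun t => X u t) (α u • (-sin v, cos v, (0 : ℝ))) v := by
      simp only [hX_rev]
      exact hasDerivAt_revolve_angle _ v
    rw [hη_v.deriv, hXv, hX_v.deriv, mul_smul]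
end

section
/- Suppose k₂(u) = −1 for all u ∈ (a,b). Then 0 < α(u) < 1 for all u, and there exists a constant c ∈ ℝ such that α(u)^{2m} + (u − c)^{2m} = 1 for all u ∈ (a,b); that is, the profile curve lies on the unit sphere of the norm ‖·‖ (up to translation along the rotation axis). -/
/-!
Solving `k₂ = -1` for `α` gives `α = (α'^{M/(M-1)} + 1)^{-1/M}` with `M = 2m`, which lies in
`(0, 1)` and can be solved back for the slope: `α^{M-1} α' = (1 - α^M)^{(M-1)/M}`. This is exactly
the statement that `β = (1 - α^M)^{1/M}` has derivative `-1`, so `β(u) = c - u` and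
`α^M + (u - c)^M = 1`.
-/

open Real Set

lemma eq_of_neg_one_div_mul_eq_neg_one {x t : ℝ} (h : -(1 / x) * t = -1) : x = t := by
  have hx : x ≠ 0 := by rintro rfl; norm_num at h
  field_simp at h
  linarith

lemma rpow_add_one_rpow_mem_Ioo {y r : ℝ} (hy : 0 < y) (q : ℝ) (hr : r < 0) :
    (y ^ q + 1) ^ r ∈ Ioo 0 1 :=
  have hB : 1 < y ^ q + 1 := lt_add_of_pos_left 1 (rpow_pos_of_pos hy q)
  ⟨rpow_pos_of_pos (by linarith) r, rpow_lt_one_of_one_lt_of_neg hB hr⟩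

section

variable {M : ℝ}

lemma rpow_sub_one_mul_eq_one_sub_rpow_rpow (hM : 1 < M) {x y : ℝ} (hy : 0 < y)
    (hx : x = (y ^ (M / (M - 1)) + 1) ^ (-1 / M)) :
    x ^ (M - 1) * y = (1 - x ^ M) ^ ((M - 1) / M) := by
  have hM1 : M - 1 ≠ 0 := by linarith
  have hB : 0 < y ^ (M / (M - 1)) + 1 := by positivity
  have hx0 : 0 < x := hx ▸ rpow_pos_of_pos hB _
  have hxM : x ^ M * (y ^ (M / (M - 1)) + 1) = 1 := by
    rw [hx, ← rpow_mul hB.le, show -1 / M * M = -1 by field_simp, rpow_neg_one,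
      inv_mul_cancel₀ hB.ne']
  have hsplit : 1 - x ^ M = y ^ (M / (M - 1)) * x ^ M := by linarith
  rw [hsplit, mul_rpow (by positivity) (by positivity), ← rpow_mul hy.le, ← rpow_mul hx0.le,
    show M / (M - 1) * ((M - 1) / M) = 1 by field_simp,
    show M * ((M - 1) / M) = M - 1 by field_simp, rpow_one, mul_comm]

lemma HasDerivAt.one_sub_rpow_rpow_inv {f : ℝ → ℝ} {f' u : ℝ} (hM : 1 < M)
    (hf : HasDerivAt f f' u) (h0 : 0 < f u) (h1 : f u < 1)
    (hslope : f u ^ (M - 1) * f' = (1 - f u ^ M) ^ ((M - 1) / M)) :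
    HasDerivAt (fun v => (1 - f v ^ M) ^ M⁻¹) (-1) u := by
  have hφ : 0 < 1 - f u ^ M := sub_pos.2 (rpow_lt_one h0.le h1 (by linarith))
  convert ((hf.rpow_const (p := M) (Or.inl h0.ne')).const_sub 1).rpow_const
    (p := M⁻¹) (Or.inl hφ.ne') using 1
  have hexp : (1 - f u ^ M) ^ ((M - 1) / M) * (1 - f u ^ M) ^ (M⁻¹ - 1) = 1 := by
    rw [← rpow_add hφ, show (M - 1) / M + (M⁻¹ - 1) = 0 by field_simp; ring, rpow_zero]
  have hM0 : M ≠ 0 := (zero_lt_one.trans hM).ne'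
  calc (-1 : ℝ) = -((f u ^ (M - 1) * f') * (1 - f u ^ M) ^ (M⁻¹ - 1)) := by rw [hslope, hexp]
    _ = _ := by field_simp

end

lemma IsOpen.exists_eq_const_sub_of_hasDerivAt_neg_one {s : Set ℝ} {f : ℝ → ℝ} (hs : IsOpen s)
    (hs' : IsPreconnected s) (hf : ∀ u ∈ s, HasDerivAt f (-1) u) :
    ∃ c, ∀ u ∈ s, f u = c - u := by
  obtain ⟨c, hc⟩ := hs.exists_eq_add_of_deriv_eq hs'
    (fun u hu => (hf u hu).differentiableAt.differentiableWithinAt)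
    differentiable_neg.differentiableOn (fun u hu => by simp [(hf u hu).deriv])
  exact ⟨c, fun u hu => by rw [hc hu]; ring⟩

theorem k2_eq_neg_one_profile_on_unit_sphere_general (m : ℕ) (hm : 2 ≤ m) (a b : ℝ) (α : ℝ → ℝ)
    (hα' : ∀ u ∈ Set.Ioo a b, 0 < deriv α u)
    (k₂ : ℝ → ℝ)
    (hk₂ : ∀ u, k₂ u =
      -(1 / α u) * (deriv α u ^ ((2 * (m : ℝ)) / (2 * (m : ℝ) - 1)) + 1)
          ^ (-(1 : ℝ) / (2 * (m : ℝ))))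
    (h : ∀ u ∈ Set.Ioo a b, k₂ u = -1) :
    (∀ u ∈ Set.Ioo a b, 0 < α u ∧ α u < 1) ∧
    ∃ c : ℝ, ∀ u ∈ Set.Ioo a b, α u ^ (2 * m) + (u - c) ^ (2 * m) = 1 := by
  set M : ℝ := 2 * (m : ℝ)
  have hM : 1 < M := by linarith [show (2 : ℝ) ≤ m by exact_mod_cast hm]
  have hprofile : ∀ u ∈ Ioo a b, α u = (deriv α u ^ (M / (M - 1)) + 1) ^ (-1 / M) :=
    fun u hu => eq_of_neg_one_div_mul_eq_neg_one (by rw [← hk₂, h u hu])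
  have hbounds : ∀ u ∈ Ioo a b, 0 < α u ∧ α u < 1 := fun u hu =>
    hprofile u hu ▸ rpow_add_one_rpow_mem_Ioo (hα' u hu) _
      (div_neg_of_neg_of_pos (by norm_num) (by linarith))
  refine ⟨hbounds, ?_⟩
  -- `deriv α u ≠ 0` forces differentiability, as `deriv` is `0` at non-differentiable points.
  have hβ : ∀ u ∈ Ioo a b, HasDerivAt (fun v => (1 - α v ^ M) ^ M⁻¹) (-1) u := fun u hu =>
    (differentiableAt_of_deriv_ne_zero (hα' u hu).ne').hasDerivAt.one_sub_rpow_rpow_inv hM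
      (hbounds u hu).1 (hbounds u hu).2
      (rpow_sub_one_mul_eq_one_sub_rpow_rpow hM (hα' u hu) (hprofile u hu))
  obtain ⟨c, hc⟩ := isOpen_Ioo.exists_eq_const_sub_of_hasDerivAt_neg_one isPreconnected_Ioo hβ
  refine ⟨c, fun u hu => ?_⟩
  have hφ : 0 ≤ 1 - α u ^ M :=
    sub_nonneg.2 (rpow_le_one (hbounds u hu).1.le (hbounds u hu).2.le (by linarith))
  have hcast : ((2 * m : ℕ) : ℝ) = M := by push_cast; rfl
  have hsphere : 1 - α u ^ M = (c - u) ^ M := by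
    rw [← hc u hu, ← rpow_mul hφ, inv_mul_cancel₀ (by linarith), rpow_one]
  rw [← neg_sub c u, (even_two_mul m).neg_pow, ← rpow_natCast, ← rpow_natCast, hcast, ← hsphere]
  ring

/-- If the principal curvature `k₂` of the rotational surface
`X(u,v) = (α(u) cos v, α(u) sin v, u)` is identically `−1`, then `0 < α < 1` and the
profile curve lies on the unit sphere of the norm (up to translation along the axis):
`α(u)^{2m} + (u − c)^{2m} = 1`. -/
theorem k2_eq_neg_one_profile_on_unit_sphere (m : ℕ) (hm : 2 ≤ m) (a b : ℝ) (α : ℝ → ℝ)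
    (hα : ContDiffOn ℝ 2 α (Set.Ioo a b))
    (hαpos : ∀ u ∈ Set.Ioo a b, 0 < α u)
    (hα' : ∀ u ∈ Set.Ioo a b, 0 < deriv α u)
    (k₂ : ℝ → ℝ)
    (hk₂ : ∀ u, k₂ u =
      -(1 / α u) * (deriv α u ^ ((2 * (m : ℝ)) / (2 * (m : ℝ) - 1)) + 1)
          ^ (-(1 : ℝ) / (2 * (m : ℝ))))
    (h : ∀ u ∈ Set.Ioo a b, k₂ u = -1) :
    (∀ u ∈ Set.Ioo a b, 0 < α u ∧ α u < 1) ∧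
    ∃ c : ℝ, ∀ u ∈ Set.Ioo a b, α u ^ (2 * m) + (u - c) ^ (2 * m) = 1 :=
  k2_eq_neg_one_profile_on_unit_sphere_general m hm a b α hα' k₂ hk₂ h
end

section
/- Let μ ≠ 0 and suppose k₁(u) = μ for all u ∈ (a,b). Then there exist constants c₁, c₂ ∈ ℝ such that 0 < c₁ − μ·α(u) < 1 for all u, the first integral (α'(u)^{2m/(2m−1)} + 1)^{−1/(2m)} = c₁ − μ·α(u) holds on (a,b), and moreover (c₁ − μ·α(u))^{2m} + μ^{2m} (u − c₂)^{2m} = 1 for all u ∈ (a,b); that is, the profile curve lies on a Lamé curve x^{2m} + y^{2m} = 1 scaled by 1/|μ| (up to translation). -/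
/-!
Write `s = 2m`. The derivative of `(α'^{s/(s-1)} + 1)^{-1/s}` is `-α' k₁`, so when `k₁ = μ` the
function `(α'^{s/(s-1)} + 1)^{-1/s} + μα` is constant, which is the first integral. The function
`f = c₁ - μα` then lies in `(0, 1)` and satisfies `α' f^{s-1} = (1 - f^s)^{1-1/s}`, which makes
`(1 - f^s)^{1/s}` have derivative exactly `μ`. Hence `(1 - f^s)^{1/s} = μ (u - c₂)`, and raising
this to the power `s` gives the Lamé curve.
-/

open Real Set

/-- The curvature `k₁` of the paper, with `2m` replaced by a real exponent `s`. -/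
noncomputable def profileCurvature (s t t' : ℝ) : ℝ :=
  (1 / (s - 1)) * (t ^ (s / (s - 1)) + 1) ^ (-(s + 1) / s) * t ^ (-(s - 2) / (s - 1)) * t'

noncomputable def firstIntegral (s t : ℝ) : ℝ :=
  (t ^ (s / (s - 1)) + 1) ^ (-(1 : ℝ) / s)

theorem IsOpen.exists_eq_mul_add_of_hasDerivAt {𝕜 : Type*} [RCLike 𝕜]
    {s : Set 𝕜} (hs : IsOpen s) (hs' : IsPreconnected s) {f : 𝕜 → 𝕜} {c : 𝕜}
    (hf : ∀ x ∈ s, HasDerivAt f c x) : ∃ d, ∀ x ∈ s, f x = c * x + d :=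
  hs.exists_eq_add_of_deriv_eq hs' (fun x hx => (hf x hx).differentiableAt.differentiableWithinAt)
    ((differentiable_id (𝕜 := 𝕜)).const_mul c).differentiableOn
    (fun x hx => by simp [(hf x hx).deriv])

section

variable {s t : ℝ}

theorem firstIntegral_pos (ht : 0 < t) : 0 < firstIntegral s t := by
  unfold firstIntegral; positivity

theorem firstIntegral_lt_one (hs : 0 < s) (ht : 0 < t) : firstIntegral s t < 1 :=
  rpow_lt_one_of_one_lt_of_neg (by linarith [rpow_pos_of_pos ht (s / (s - 1))])
    (div_neg_of_neg_of_pos (by norm_num) hs)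

theorem hasDerivAt_firstIntegral {f : ℝ → ℝ} {f' x : ℝ} (hf : HasDerivAt f f' x)
    (hfx : 0 < f x) (hs0 : s ≠ 0) (hs1 : s ≠ 1) :
    HasDerivAt (fun y => firstIntegral s (f y)) (-(f x * profileCurvature s (f x) f')) x := by
  have hbase : 0 < f x ^ (s / (s - 1)) + 1 := by positivity
  unfold firstIntegral
  convert ((hf.rpow_const (Or.inl hfx.ne')).add_const 1).rpow_const (p := -(1 : ℝ) / s)
    (Or.inl hbase.ne') using 1
  have hs1' : s - 1 ≠ 0 := sub_ne_zero.mpr hs1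
  have hexp : f x ^ (s / (s - 1) - 1) = f x * f x ^ (-(s - 2) / (s - 1)) := by
    have hsum : 1 + -(s - 2) / (s - 1) = 1 / (s - 1) := by field_simp; ring
    rw [← rpow_one_add' hfx.le (by rw [hsum]; simpa using hs1')]
    congr 1; field_simp; ring
  rw [hexp, show -(1 : ℝ) / s - 1 = -(s + 1) / s by field_simp; ring, profileCurvature]
  field_simp

theorem mul_firstIntegral_rpow_sub_one (hs0 : s ≠ 0) (hs1 : s ≠ 1) (ht : 0 < t) :
    t * firstIntegral s t ^ (s - 1) = (1 - firstIntegral s t ^ s) ^ (1 - s⁻¹) := by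
  have hs1' : s - 1 ≠ 0 := sub_ne_zero.mpr hs1
  have htp : 0 < t ^ (s / (s - 1)) := by positivity
  have hw : 0 < t ^ (s / (s - 1)) + 1 := by positivity
  have hfs : firstIntegral s t ^ s = (t ^ (s / (s - 1)) + 1)⁻¹ := by
    rw [firstIntegral, ← rpow_mul hw.le, show -(1 : ℝ) / s * s = -1 by field_simp, rpow_neg_one]
  have hcompl : 1 - firstIntegral s t ^ s = t ^ (s / (s - 1)) * (t ^ (s / (s - 1)) + 1)⁻¹ := by
    rw [hfs]; field_simp; ring
  rw [hcompl, mul_rpow htp.le (by positivity), ← rpow_mul ht.le,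
    show s / (s - 1) * (1 - s⁻¹) = 1 by field_simp, rpow_one]
  congr 1
  rw [firstIntegral, ← rpow_mul hw.le, inv_rpow hw.le, ← rpow_neg hw.le]
  congr 1
  field_simp

theorem hasDerivAt_rpow_one_sub_rpow_of_firstIntegral {f : ℝ → ℝ} {x μ : ℝ} (hs : 1 < s)
    (ht : 0 < t) (hf : HasDerivAt f (-(μ * t)) x) (hfx : f x = firstIntegral s t) :
    HasDerivAt (fun y => (1 - f y ^ s) ^ s⁻¹) μ x := by
  have hf0 : 0 < f x := hfx ▸ firstIntegral_pos ht
  have hf1 : f x ^ s < 1 :=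
    rpow_lt_one hf0.le (hfx ▸ firstIntegral_lt_one (by linarith) ht) (by linarith)
  have hcompl : 0 < 1 - f x ^ s := by linarith
  convert ((hf.rpow_const (Or.inl hf0.ne')).const_sub 1).rpow_const (p := s⁻¹)
    (Or.inl hcompl.ne') using 1
  have hs0 : s ≠ 0 := by linarith
  have hmul := mul_firstIntegral_rpow_sub_one hs0 hs.ne' ht
  rw [← hfx] at hmul
  have hexp : (1 - f x ^ s) ^ (1 - s⁻¹) * (1 - f x ^ s) ^ (s⁻¹ - 1) = 1 := by
    rw [← rpow_add hcompl]; simp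
  linear_combination (-μ * s * s⁻¹ * (1 - f x ^ s) ^ (s⁻¹ - 1)) * hmul
    - μ * (1 - f x ^ s) ^ (s⁻¹ - 1) * (1 - f x ^ s) ^ (1 - s⁻¹) * mul_inv_cancel₀ hs0 - μ * hexp

end

theorem pow_two_mul_eq_rpow (x : ℝ) (m : ℕ) : x ^ (2 * m) = x ^ (2 * (m : ℝ)) := by
  rw [← rpow_natCast]; push_cast; rfl

theorem k1_constant_profile_on_Lame_curve_general (m : ℕ) (hm : 2 ≤ m) (a b : ℝ) (α : ℝ → ℝ)
    (hα : ContDiffOn ℝ 2 α (Set.Ioo a b))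
    (hα' : ∀ u ∈ Set.Ioo a b, 0 < deriv α u)
    (μ : ℝ) (hμ : μ ≠ 0)
    (k₁ : ℝ → ℝ)
    (hk₁ : ∀ u, k₁ u =
      (1 / (2 * (m : ℝ) - 1)) *
        (deriv α u ^ ((2 * (m : ℝ)) / (2 * (m : ℝ) - 1)) + 1)
          ^ (-(2 * (m : ℝ) + 1) / (2 * (m : ℝ))) *
        deriv α u ^ (-(2 * (m : ℝ) - 2) / (2 * (m : ℝ) - 1)) *
        deriv (deriv α) u)
    (h : ∀ u ∈ Set.Ioo a b, k₁ u = μ) :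
    ∃ c₁ c₂ : ℝ, ∀ u ∈ Set.Ioo a b,
      (0 < c₁ - μ * α u ∧ c₁ - μ * α u < 1) ∧
      (deriv α u ^ ((2 * (m : ℝ)) / (2 * (m : ℝ) - 1)) + 1) ^ (-(1 : ℝ) / (2 * (m : ℝ)))
        = c₁ - μ * α u ∧
      (c₁ - μ * α u) ^ (2 * m) + μ ^ (2 * m) * (u - c₂) ^ (2 * m) = 1 := by
  set s : ℝ := 2 * (m : ℝ)
  have hs : 1 < s := by
    have : (2 : ℝ) ≤ m := by exact_mod_cast hm
    linarith
  have hαd : ∀ u ∈ Ioo a b, HasDerivAt α (deriv α u) u := fun u hu =>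
    (hα.differentiableOn two_ne_zero u hu).differentiableAt (isOpen_Ioo.mem_nhds hu) |>.hasDerivAt
  have hα'd : ∀ u ∈ Ioo a b, HasDerivAt (deriv α) (deriv (deriv α) u) u := fun u hu =>
    ((hα.deriv_of_isOpen (m := 1) isOpen_Ioo (by norm_num)).differentiableOn one_ne_zero u hu)
      |>.differentiableAt (isOpen_Ioo.mem_nhds hu) |>.hasDerivAt
  have hk : ∀ u ∈ Ioo a b, profileCurvature s (deriv α u) (deriv (deriv α) u) = μ :=
    fun u hu => (hk₁ u).symm.trans (h u hu)
  obtain ⟨c₁, hc₁⟩ : ∃ c₁, ∀ u ∈ Ioo a b, firstIntegral s (deriv α u) + μ * α u = 0 * u + c₁ :=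
    isOpen_Ioo.exists_eq_mul_add_of_hasDerivAt isPreconnected_Ioo fun u hu =>
      ((hasDerivAt_firstIntegral (hα'd u hu) (hα' u hu) (by linarith) hs.ne').add
        ((hαd u hu).const_mul μ)).congr_deriv (by rw [hk u hu]; ring)
  have hfirst : ∀ u ∈ Ioo a b, firstIntegral s (deriv α u) = c₁ - μ * α u := fun u hu => by
    linarith [hc₁ u hu]
  obtain ⟨d, hd⟩ : ∃ d, ∀ u ∈ Ioo a b, (1 - (c₁ - μ * α u) ^ s) ^ s⁻¹ = μ * u + d :=
    isOpen_Ioo.exists_eq_mul_add_of_hasDerivAt isPreconnected_Ioo fun u hu =>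
      hasDerivAt_rpow_one_sub_rpow_of_firstIntegral hs (hα' u hu)
        (((hαd u hu).const_mul μ).const_sub c₁) (hfirst u hu).symm
  refine ⟨c₁, -d / μ, fun u hu => ?_⟩
  have hf0 : 0 < c₁ - μ * α u := hfirst u hu ▸ firstIntegral_pos (hα' u hu)
  have hf1 : c₁ - μ * α u < 1 := hfirst u hu ▸ firstIntegral_lt_one (by linarith) (hα' u hu)
  refine ⟨⟨hf0, hf1⟩, hfirst u hu, ?_⟩
  have hcompl : 0 ≤ 1 - (c₁ - μ * α u) ^ s :=
    sub_nonneg.mpr (rpow_le_one hf0.le hf1.le (by linarith))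
  rw [← mul_pow, show μ * (u - -d / μ) = μ * u + d by field_simp; ring, ← hd u hu,
    pow_two_mul_eq_rpow, pow_two_mul_eq_rpow, rpow_inv_rpow hcompl (by linarith)]
  ring

/-- If the principal curvature `k₁` of the rotational surface
`X(u,v) = (α(u) cos v, α(u) sin v, u)` is identically a nonzero constant `μ`, then the
first integral `(α'^{2m/(2m−1)} + 1)^{−1/(2m)} = c₁ − μα` holds with `0 < c₁ − μα < 1`,
and the profile curve lies on a Lamé curve scaled by `1/|μ|` (up to translation):
`(c₁ − μα(u))^{2m} + μ^{2m} (u − c₂)^{2m} = 1`. -/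
theorem k1_constant_profile_on_Lame_curve (m : ℕ) (hm : 2 ≤ m) (a b : ℝ) (α : ℝ → ℝ)
    (hα : ContDiffOn ℝ 2 α (Set.Ioo a b))
    (hαpos : ∀ u ∈ Set.Ioo a b, 0 < α u)
    (hα' : ∀ u ∈ Set.Ioo a b, 0 < deriv α u)
    (μ : ℝ) (hμ : μ ≠ 0)
    (k₁ : ℝ → ℝ)
    (hk₁ : ∀ u, k₁ u =
      (1 / (2 * (m : ℝ) - 1)) *
        (deriv α u ^ ((2 * (m : ℝ)) / (2 * (m : ℝ) - 1)) + 1)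
          ^ (-(2 * (m : ℝ) + 1) / (2 * (m : ℝ))) *
        deriv α u ^ (-(2 * (m : ℝ) - 2) / (2 * (m : ℝ) - 1)) *
        deriv (deriv α) u)
    (h : ∀ u ∈ Set.Ioo a b, k₁ u = μ) :
    ∃ c₁ c₂ : ℝ, ∀ u ∈ Set.Ioo a b,
      (0 < c₁ - μ * α u ∧ c₁ - μ * α u < 1) ∧
      (deriv α u ^ ((2 * (m : ℝ)) / (2 * (m : ℝ) - 1)) + 1) ^ (-(1 : ℝ) / (2 * (m : ℝ)))
        = c₁ - μ * α u ∧
      (c₁ - μ * α u) ^ (2 * m) + μ ^ (2 * m) * (u - c₂) ^ (2 * m) = 1 :=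
  k1_constant_profile_on_Lame_curve_general m hm a b α hα hα' μ hμ k₁ hk₁ h
end

section
/- (Theorem 5.1) Let λ ≠ 0. The rotational surface with profile u satisfies k₁(α) + λ·k₂(α) = 0 for all α ∈ I if and only if there exists a constant c₂ > 0 such that for all α ∈ I one has α^{2mλ} > c₂^{2mλ} and u'(α) = c₂^{(2m−1)λ} · (α^{2mλ} − c₂^{2mλ})^{−(2m−1)/(2m)}. -/
open Real Set

/-!
Write `n = 2m`, `p = u'` and `q = n / (n - 1)`. After cancelling a nonzero factor, `k₁ + λ k₂ = 0`
is the first-order equation `p' = -(n - 1) λ p (1 + p^q) / α`, and along this equation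
`(1 + p^(-q)) α^(-nλ)` has derivative zero: the derivative is exactly a nonzero multiple of the
defect of the equation. So the equation holds on the interval iff this positive first integral
is constant, i.e. equal to `c^(-nλ)` for some `c > 0`. Solving
`(1 + p^(-q)) α^(-nλ) = c^(-nλ)` for `p > 0` gives the stated formula, and such a `p` exists
exactly when `c^(nλ) < α^(nλ)`.
-/

noncomputable def weingartenRhs (n lam p x : ℝ) : ℝ :=
  -((n - 1) * lam * p * (1 + p ^ (n / (n - 1)))) / x

noncomputable def weingartenFirstIntegral (n lam p x : ℝ) : ℝ :=
  (1 + p ^ (-(n / (n - 1)))) * x ^ (-(n * lam))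

section Calculus

variable {𝕜 G : Type*} [RCLike 𝕜] [NormedAddCommGroup G] [NormedSpace 𝕜 G]

theorem IsOpen.forall_deriv_eq_zero_iff_exists_const {f f' : 𝕜 → G} {s : Set 𝕜} (hs : IsOpen s)
    (hs' : IsPreconnected s) (hf : ∀ x ∈ s, HasDerivAt f (f' x) x) :
    (∀ x ∈ s, f' x = 0) ↔ ∃ C, ∀ x ∈ s, f x = C := by
  refine ⟨fun h => hs.exists_is_const_of_deriv_eq_zero hs'
    (fun x hx => (hf x hx).differentiableAt.differentiableWithinAt)
    (fun x hx => (hf x hx).deriv.trans (h x hx)), ?_⟩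
  rintro ⟨C, hC⟩ x hx
  exact (hf x hx).unique
    ((hasDerivAt_const x C).congr_of_eventuallyEq (Filter.eventuallyEq_of_mem (hs.mem_nhds hx) hC))

end Calculus

theorem exists_const_iff_exists_pos_rpow {α : Type*} {f : α → ℝ} {s : Set α} {e : ℝ} (he : e ≠ 0)
    (hf : ∀ x ∈ s, 0 < f x) :
    (∃ C, ∀ x ∈ s, f x = C) ↔ ∃ c : ℝ, 0 < c ∧ ∀ x ∈ s, f x = c ^ e := by
  refine ⟨?_, fun ⟨c, _, hc⟩ => ⟨c ^ e, hc⟩⟩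
  rintro ⟨C, hC⟩
  obtain rfl | ⟨x₀, hx₀⟩ := s.eq_empty_or_nonempty
  · exact ⟨1, one_pos, fun x hx => hx.elim⟩
  have hCpos : 0 < C := hC x₀ hx₀ ▸ hf x₀ hx₀
  exact ⟨C ^ e⁻¹, rpow_pos_of_pos hCpos _, fun x hx => by rw [rpow_inv_rpow hCpos.le he, hC x hx]⟩

section Weingarten

variable {n lam p x : ℝ}

theorem weingarten_eq_zero_iff (hn : 1 < n) (hx : 0 < x) (hp : 0 < p) (w : ℝ) :
    -(1 / (n - 1)) * (1 + p ^ (n / (n - 1))) ^ (-(n + 1) / n) * p ^ (-(n - 2) / (n - 1)) * w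
        + lam * (-(1 / x) * (1 + p ^ (n / (n - 1))) ^ (-(1 : ℝ) / n) * p ^ ((1 : ℝ) / (n - 1)))
        = 0
      ↔ w = weingartenRhs n lam p x := by
  have hn₁ : n - 1 ≠ 0 := (sub_pos.2 hn).ne'
  set A := 1 + p ^ (n / (n - 1))
  have hA : 0 < A := by positivity
  have hA' : A ^ (-(n + 1) / n) = A ^ (-(1 : ℝ) / n) * A⁻¹ := by
    rw [← rpow_neg_one A, ← rpow_add hA]
    congr 1
    field_simp
    ring
  have hp' : p ^ (-(n - 2) / (n - 1)) = p ^ ((1 : ℝ) / (n - 1)) * p⁻¹ := by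
    rw [← rpow_neg_one p, ← rpow_add hp]
    congr 1
    field_simp
    ring
  have hfactor :
      (1 / (n - 1)) * A ^ (-(1 : ℝ) / n) * A⁻¹ * p ^ ((1 : ℝ) / (n - 1)) * p⁻¹ ≠ 0 := by
    have := sub_pos.2 hn
    positivity
  have hsum : -(1 / (n - 1)) * A ^ (-(n + 1) / n) * p ^ (-(n - 2) / (n - 1)) * w
        + lam * (-(1 / x) * A ^ (-(1 : ℝ) / n) * p ^ ((1 : ℝ) / (n - 1)))
      = -((1 / (n - 1)) * A ^ (-(1 : ℝ) / n) * A⁻¹ * p ^ ((1 : ℝ) / (n - 1)) * p⁻¹)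
        * (w - weingartenRhs n lam p x) := by
    rw [hA', hp', weingartenRhs]
    field_simp
    ring
  rw [hsum, mul_eq_zero, neg_eq_zero, sub_eq_zero, or_iff_right hfactor]

theorem weingartenFirstIntegral_pos (hp : 0 ≤ p) (hx : 0 < x) :
    0 < weingartenFirstIntegral n lam p x := by
  unfold weingartenFirstIntegral
  positivity

theorem hasDerivAt_weingartenFirstIntegral {p : ℝ → ℝ} {p' : ℝ} (hn : 1 < n)
    (hp : HasDerivAt p p' x) (hpx : 0 < p x) (hx : 0 < x) :
    HasDerivAt (fun y => weingartenFirstIntegral n lam (p y) y)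
      (n / (n - 1) * p x ^ (-(n / (n - 1)) - 1) * x ^ (-(n * lam)) *
        (weingartenRhs n lam (p x) x - p')) x := by
  have hn₁ : n - 1 ≠ 0 := (sub_pos.2 hn).ne'
  have hd := ((hp.rpow_const (p := -(n / (n - 1))) (Or.inl hpx.ne')).const_add 1).mul
    (hasDerivAt_rpow_const (p := -(n * lam)) (Or.inl hx.ne'))
  refine hd.congr_deriv ?_
  have hP : p x ^ (n / (n - 1)) = (p x ^ (-(n / (n - 1))))⁻¹ := by
    rw [rpow_neg hpx.le, inv_inv]
  rw [rpow_sub_one hpx.ne', rpow_sub_one hx.ne', weingartenRhs, hP]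
  have : 0 < p x ^ (-(n / (n - 1))) := rpow_pos_of_pos hpx _
  field_simp
  ring

theorem weingartenFirstIntegral_eq_rpow_iff (hn : 1 < n) (hx : 0 < x) (hp : 0 < p) {c : ℝ}
    (hc : 0 < c) :
    weingartenFirstIntegral n lam p x = c ^ (-(n * lam)) ↔
      c ^ (n * lam) < x ^ (n * lam) ∧
        p = c ^ ((n - 1) * lam) * (x ^ (n * lam) - c ^ (n * lam)) ^ (-(n - 1) / n) := by
  have hn₁ : n - 1 ≠ 0 := (sub_pos.2 hn).ne'
  have hn₀ : n ≠ 0 := by linarith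
  set X := x ^ (n * lam)
  set K := c ^ (n * lam)
  have hK : 0 < K := rpow_pos_of_pos hc _
  have hP : 0 < p ^ (-(n / (n - 1))) := rpow_pos_of_pos hp _
  have hfirst : weingartenFirstIntegral n lam p x = c ^ (-(n * lam)) ↔
      p ^ (-(n / (n - 1))) = (X - K) / K := by
    rw [weingartenFirstIntegral, rpow_neg hx.le, rpow_neg hc.le, eq_div_iff hK.ne']
    constructor <;> intro h <;> field_simp at h ⊢ <;> linarith
  rw [hfirst]
  by_cases hlt : K < X
  · have hexp : -(n / (n - 1)) = (-(n - 1) / n)⁻¹ := by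
      field_simp
    have hKexp : c ^ ((n - 1) * lam) = (K⁻¹) ^ (-(n - 1) / n) := by
      rw [inv_rpow hK.le, ← rpow_neg hK.le, ← rpow_mul hc.le]
      congr 1
      field_simp
    rw [hexp, rpow_inv_eq hp.le (div_nonneg (sub_pos.2 hlt).le hK.le)
      (div_ne_zero (neg_ne_zero.2 hn₁) hn₀), hKexp, div_eq_inv_mul,
      mul_rpow (inv_nonneg.2 hK.le) (sub_pos.2 hlt).le]
    simp [hlt]
  · have : (X - K) / K ≤ 0 := div_nonpos_of_nonpos_of_nonneg (by linarith) hK.le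
    simp only [hlt, false_and, iff_false]
    linarith

end Weingarten

/-- (Theorem 5.1) The rotational surface `X(α,v) = (α cos v, α sin v, u(α))` satisfies
`k₁ + λk₂ = 0` for a nonzero constant `λ` if and only if there is a positive constant
`c₂` with `u'(α) = c₂^{(2m−1)λ} (α^{2mλ} − c₂^{2mλ})^{−(2m−1)/(2m)}`. -/
theorem homogeneous_linear_Weingarten_iff (m : ℕ) (hm : 2 ≤ m) (a b : ℝ)
    (hI : Set.Ioo a b ⊆ Set.Ioi (0 : ℝ)) (u : ℝ → ℝ)
    (hu : ContDiffOn ℝ 2 u (Set.Ioo a b))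
    (hu' : ∀ x ∈ Set.Ioo a b, 0 < deriv u x)
    (lam : ℝ) (hlam : lam ≠ 0)
    (k₁ k₂ : ℝ → ℝ)
    (hk₁ : ∀ x, k₁ x =
      -(1 / (2 * (m : ℝ) - 1)) *
        (1 + deriv u x ^ ((2 * (m : ℝ)) / (2 * (m : ℝ) - 1)))
          ^ (-(2 * (m : ℝ) + 1) / (2 * (m : ℝ))) *
        deriv u x ^ (-(2 * (m : ℝ) - 2) / (2 * (m : ℝ) - 1)) *
        deriv (deriv u) x)
    (hk₂ : ∀ x, k₂ x =
      -(1 / x) * (1 + deriv u x ^ ((2 * (m : ℝ)) / (2 * (m : ℝ) - 1)))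
          ^ (-(1 : ℝ) / (2 * (m : ℝ))) *
        deriv u x ^ ((1 : ℝ) / (2 * (m : ℝ) - 1))) :
    (∀ x ∈ Set.Ioo a b, k₁ x + lam * k₂ x = 0) ↔
    ∃ c₂ : ℝ, 0 < c₂ ∧ ∀ x ∈ Set.Ioo a b,
      c₂ ^ (2 * (m : ℝ) * lam) < x ^ (2 * (m : ℝ) * lam) ∧
      deriv u x = c₂ ^ ((2 * (m : ℝ) - 1) * lam) *
        (x ^ (2 * (m : ℝ) * lam) - c₂ ^ (2 * (m : ℝ) * lam))
          ^ (-(2 * (m : ℝ) - 1) / (2 * (m : ℝ))) := by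
  set n : ℝ := 2 * m
  have hn : 1 < n := by
    have : (2 : ℝ) ≤ m := by exact_mod_cast hm
    linarith
  have hu'' : ∀ x ∈ Ioo a b, HasDerivAt (deriv u) (deriv (deriv u) x) x := fun x hx =>
    (((hu.deriv_of_isOpen isOpen_Ioo (m := 1) le_rfl).differentiableOn one_ne_zero).differentiableAt
      (isOpen_Ioo.mem_nhds hx)).hasDerivAt
  have hF := fun x hx =>
    hasDerivAt_weingartenFirstIntegral (lam := lam) hn (hu'' x hx) (hu' x hx) (hI hx)
  calc (∀ x ∈ Ioo a b, k₁ x + lam * k₂ x = 0)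
      ↔ ∀ x ∈ Ioo a b, deriv (deriv u) x = weingartenRhs n lam (deriv u x) x :=
        forall₂_congr fun x hx => by rw [hk₁, hk₂, weingarten_eq_zero_iff hn (hI hx) (hu' x hx)]
    _ ↔ ∀ x ∈ Ioo a b, n / (n - 1) * deriv u x ^ (-(n / (n - 1)) - 1) * x ^ (-(n * lam)) *
          (weingartenRhs n lam (deriv u x) x - deriv (deriv u) x) = 0 :=
        forall₂_congr fun x hx => by
          have : 0 < n / (n - 1) := div_pos (by linarith) (sub_pos.2 hn)
          have := hu' x hx
          have : 0 < x := hI hx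
          rw [mul_eq_zero_iff_left ?_, sub_eq_zero, eq_comm]
          positivity
    _ ↔ ∃ C, ∀ x ∈ Ioo a b, weingartenFirstIntegral n lam (deriv u x) x = C :=
        isOpen_Ioo.forall_deriv_eq_zero_iff_exists_const isPreconnected_Ioo hF
    _ ↔ ∃ c₂ : ℝ, 0 < c₂ ∧ ∀ x ∈ Ioo a b,
          weingartenFirstIntegral n lam (deriv u x) x = c₂ ^ (-(n * lam)) :=
        exists_const_iff_exists_pos_rpow (neg_ne_zero.2 (mul_ne_zero (by linarith) hlam))
          fun x hx => weingartenFirstIntegral_pos (hu' x hx).le (hI hx)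
    _ ↔ _ := exists_congr fun c => and_congr_right fun hc => forall₂_congr fun x hx =>
        weingartenFirstIntegral_eq_rpow_iff hn (hI hx) (hu' x hx) hc
end

section
/- Let λ satisfy 0 < (2m−1)λ ≤ 1 and let c₂ > 0. Then the function F(ρ) = c₂^{(2m−1)λ} · (ρ^{2mλ} − c₂^{2mλ})^{−(2m−1)/(2m)} is not integrable on (c₂, ∞); more precisely, lim_{α→∞} ∫_{c₂}^{α} F(ρ) dρ = ∞. -/
open Real Set MeasureTheory Filter

/-!
With `a = 2mλ` and `b = (2m-1)/(2m) ∈ (0, 1)` we have `F ρ = C (ρ^a - c₂^a)^(-b)` and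
`ab = (2m-1)λ ≤ 1`. Near `c₂` the mean value theorem gives `ρ^a - c₂^a ≥ δ (ρ - c₂)`, so `F` is
dominated by a multiple of `(ρ - c₂)^(-b)`, integrable because `b < 1`; for `ρ ≥ 1` it is bounded
below by `C ρ^(-ab) ≥ C ρ⁻¹`, whose integral grows like `log α`.
-/

theorem mul_sub_le_rpow_sub_rpow {a c ρ α : ℝ} (ha : 0 ≤ a) (hc : 0 < c) (hcρ : c ≤ ρ)
    (hρα : ρ ≤ α) : a * min (c ^ (a - 1)) (α ^ (a - 1)) * (ρ - c) ≤ ρ ^ a - c ^ a := by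
  refine (convex_Icc c α).mul_sub_le_image_sub_of_le_deriv (f := fun x => x ^ a)
    (continuousOn_id.rpow_const fun x hx => Or.inl (hc.trans_le hx.1).ne') ?_ ?_
    c ⟨le_rfl, hcρ.trans hρα⟩ ρ ⟨hcρ, hρα⟩ hcρ
  all_goals rw [interior_Icc]
  · exact fun x hx =>
      (hasDerivAt_rpow_const (Or.inl (hc.trans hx.1).ne')).differentiableAt.differentiableWithinAt
  · intro x hx
    rw [Real.deriv_rpow_const]
    refine mul_le_mul_of_nonneg_left ?_ ha
    rcases le_total 0 (a - 1) with h | h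
    · exact (min_le_left _ _).trans (rpow_le_rpow hc.le hx.1.le h)
    · exact (min_le_right _ _).trans (rpow_le_rpow_of_nonpos (hc.trans hx.1) hx.2.le h)

theorem integrableOn_Ioo_rpow_sub_rpow_rpow_neg {a b c : ℝ} (ha : 0 < a) (hb₀ : 0 ≤ b)
    (hb₁ : b < 1) (hc : 0 < c) (α : ℝ) :
    IntegrableOn (fun ρ => (ρ ^ a - c ^ a) ^ (-b)) (Ioo c α) := by
  rcases le_or_gt α c with hαc | hcα
  · simp [Ioo_eq_empty_of_le hαc]
  set δ := a * min (c ^ (a - 1)) (α ^ (a - 1))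
  have hδ : 0 < δ := mul_pos ha (lt_min (rpow_pos_of_pos hc _) (rpow_pos_of_pos (hc.trans hcα) _))
  have hmajorant : IntegrableOn (fun ρ => δ ^ (-b) * (ρ - c) ^ (-b)) (Ioo c α) := by
    have h := ((intervalIntegral.intervalIntegrable_rpow' (a := 0) (b := α - c)
      (by linarith : -1 < -b)).comp_sub_right c).const_mul (δ ^ (-b))
    rwa [zero_add, sub_add_cancel, intervalIntegrable_iff_integrableOn_Ioo_of_le hcα.le] at h
  refine hmajorant.mono'
    (by fun_prop : Measurable fun ρ : ℝ => (ρ ^ a - c ^ a) ^ (-b)).aestronglyMeasurable ?_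
  filter_upwards [ae_restrict_mem measurableSet_Ioo] with ρ ⟨hcρ, hρα⟩
  have hpos : 0 < ρ ^ a - c ^ a := sub_pos.2 (rpow_lt_rpow hc.le hcρ ha)
  rw [norm_of_nonneg (rpow_nonneg hpos.le _), ← mul_rpow hδ.le (sub_nonneg.2 hcρ.le)]
  exact rpow_le_rpow_of_nonpos (mul_pos hδ (sub_pos.2 hcρ))
    (mul_sub_le_rpow_sub_rpow ha.le hc hcρ.le hρα.le) (neg_nonpos.2 hb₀)

theorem inv_le_rpow_sub_rpow_rpow_neg {a b c ρ : ℝ} (ha : 0 < a) (hb : 0 ≤ b) (hab : a * b ≤ 1)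
    (hc : 0 ≤ c) (hcρ : c < ρ) (hρ : 1 ≤ ρ) : ρ⁻¹ ≤ (ρ ^ a - c ^ a) ^ (-b) := calc
  ρ⁻¹ = ρ ^ (-1 : ℝ) := (rpow_neg_one ρ).symm
  _ ≤ ρ ^ (-(a * b)) := rpow_le_rpow_of_exponent_le hρ (neg_le_neg hab)
  _ = (ρ ^ a) ^ (-b) := by rw [← rpow_mul (by linarith), mul_neg]
  _ ≤ (ρ ^ a - c ^ a) ^ (-b) :=
    rpow_le_rpow_of_nonpos (sub_pos.2 (rpow_lt_rpow hc hcρ ha)) (sub_le_self _ (rpow_nonneg hc a))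
      (neg_nonpos.2 hb)

theorem not_integrableOn_Ioi_of_inv_le {f : ℝ → ℝ} {R : ℝ} (hR : 0 < R)
    (hf : ∀ ρ ∈ Ioi R, ρ⁻¹ ≤ f ρ) : ¬ IntegrableOn f (Ioi R) := fun h =>
  not_integrableOn_Ioi_inv <| h.mono' measurable_inv.aestronglyMeasurable <| by
    filter_upwards [ae_restrict_mem measurableSet_Ioi] with ρ hρ
    rw [norm_of_nonneg (inv_nonneg.2 (hR.trans hρ).le)]
    exact hf ρ hρ

theorem tendsto_setIntegral_Ioo_atTop_of_inv_le {f : ℝ → ℝ} {c R : ℝ} (hR : 0 < R) (hcR : c ≤ R)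
    (hf : ∀ α, IntegrableOn f (Ioo c α)) (hf₀ : ∀ ρ ∈ Ioi c, 0 ≤ f ρ)
    (hinv : ∀ ρ ∈ Ioi R, ρ⁻¹ ≤ f ρ) :
    Tendsto (fun α => ∫ ρ in Ioo c α, f ρ) atTop atTop := by
  refine tendsto_atTop_mono' atTop ?_
    (tendsto_log_atTop.comp (tendsto_id.atTop_div_const hR) : Tendsto (fun α => log (α / R)) _ _)
  filter_upwards [eventually_ge_atTop R] with α hRα
  have hinv_int : IntegrableOn (·⁻¹) (Ioo R α) :=
    (intervalIntegrable_inv_iff.2 (Or.inr (notMem_uIcc_of_lt hR (hR.trans_le hRα)))).1.mono_set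
      Ioo_subset_Ioc_self
  calc log (α / R) = ∫ ρ in Ioo R α, ρ⁻¹ := by
        rw [← integral_Ioc_eq_integral_Ioo, ← intervalIntegral.integral_of_le hRα,
          integral_inv_of_pos hR (hR.trans_le hRα)]
    _ ≤ ∫ ρ in Ioo R α, f ρ :=
        setIntegral_mono_on hinv_int ((hf α).mono_set (Ioo_subset_Ioo_left hcR)) measurableSet_Ioo
          fun ρ hρ => hinv ρ hρ.1
    _ ≤ ∫ ρ in Ioo c α, f ρ :=
        setIntegral_mono_set (hf α) ((ae_restrict_mem measurableSet_Ioo).mono fun ρ hρ => hf₀ ρ hρ.1)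
          (Ioo_subset_Ioo_left hcR).eventuallyLE

/-- For `0 < (2m−1)λ ≤ 1` and `c₂ > 0`, the function
`F(ρ) = c₂^{(2m−1)λ} (ρ^{2mλ} − c₂^{2mλ})^{−(2m−1)/(2m)}` is not integrable on
`(c₂, ∞)`; more precisely, `∫_{c₂}^{α} F(ρ) dρ → ∞` as `α → ∞`. -/
theorem not_integrable_on_Ioi_of_small_lambda (m : ℕ) (hm : 2 ≤ m) (lam c₂ : ℝ)
    (hlam₀ : 0 < (2 * (m : ℝ) - 1) * lam) (hlam₁ : (2 * (m : ℝ) - 1) * lam ≤ 1)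
    (hc : 0 < c₂)
    (F : ℝ → ℝ)
    (hF : ∀ ρ, F ρ = c₂ ^ ((2 * (m : ℝ) - 1) * lam) *
      (ρ ^ (2 * (m : ℝ) * lam) - c₂ ^ (2 * (m : ℝ) * lam))
        ^ (-(2 * (m : ℝ) - 1) / (2 * (m : ℝ)))) :
    ¬ MeasureTheory.IntegrableOn F (Set.Ioi c₂) ∧
    Filter.Tendsto (fun α => ∫ ρ in Set.Ioo c₂ α, F ρ) Filter.atTop Filter.atTop := by
  have hm' : (2 : ℝ) ≤ m := by exact_mod_cast hm
  set a := 2 * (m : ℝ) * lam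
  set b := (2 * (m : ℝ) - 1) / (2 * m)
  set C := c₂ ^ ((2 * (m : ℝ) - 1) * lam)
  have hab : a * b = (2 * (m : ℝ) - 1) * lam := by simp only [a, b]; field_simp
  have hb₀ : 0 ≤ b := div_nonneg (by linarith) (by linarith)
  have hb₁ : b < 1 := by rw [div_lt_one (by positivity)]; linarith
  have ha : 0 < a := pos_of_mul_pos_left (hab ▸ hlam₀) hb₀
  have hF' : F = fun ρ => C * (ρ ^ a - c₂ ^ a) ^ (-b) := funext fun ρ => by rw [hF, neg_div]
  have hC : 0 < C := rpow_pos_of_pos hc _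
  have htail : ∀ ρ ∈ Ioi (max c₂ 1), ρ⁻¹ ≤ (ρ ^ a - c₂ ^ a) ^ (-b) := fun ρ hρ =>
    inv_le_rpow_sub_rpow_rpow_neg ha hb₀ (hab ▸ hlam₁) hc.le
      (lt_of_le_of_lt (le_max_left _ _) hρ) (le_max_right _ _ |>.trans hρ.le)
  subst hF'
  constructor
  · rw [IntegrableOn, integrable_const_mul_iff (isUnit_iff_ne_zero.2 hC.ne')]
    exact fun h => not_integrableOn_Ioi_of_inv_le (by positivity) htail
      (IntegrableOn.mono_set h (Ioi_subset_Ioi (le_max_left _ _)))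
  · simp_rw [integral_const_mul]
    exact (tendsto_setIntegral_Ioo_atTop_of_inv_le (by positivity) (le_max_left _ _)
      (integrableOn_Ioo_rpow_sub_rpow_rpow_neg ha hb₀ hb₁ hc)
      (fun ρ hρ => rpow_nonneg (sub_nonneg.2 (rpow_le_rpow hc.le (mem_Ioi.1 hρ).le ha.le)) _)
      htail).const_mul_atTop hC
end

section
/- (Theorem 5.3) Let λ satisfy 0 < (2m−1)λ ≤ 1, let c₂ > 0 and c₃ ∈ ℝ. Then there exists a C² function α̂ : ℝ → ℝ such that: α̂(u) ≥ c₂ for all u, α̂(c₃) = c₂, α̂'(c₃) = 0, α̂'(u) > 0 for u > c₃, α̂'(u) < 0 for u < c₃, lim_{u→±∞} α̂(u) = ∞, and α̂ satisfies the differential equation α̂(u)·α̂''(u) = (2m−1)λ·( α̂'(u)² + |α̂'(u)|^{(2m−2)/(2m−1)} ) for all u ∈ ℝ. Consequently, the rotational surface (α̂(u) cos v, α̂(u) sin v, u) satisfies k₁ + λk₂ = 0 at every point where α̂' ≠ 0. -/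
/-! Put `q = 2m/(2m-1) ∈ (1, 2]` and `K = (2m-1)λ ∈ (0, 1]`, so that the equation reads
`α α'' = K (α'² + |α'|^(2-q))`. Where `α' ≥ 0` it has the first integral
`α'^q + 1 = (α/c₂)^(qK)`, i.e. `α' = G(α)`, and separating variables the increasing branch is the
inverse of `U(x) = ∫_{c₂}^x ds / G(s)`. The integral converges at `c₂` because `G(s)` vanishes
there only like `(s - c₂)^(1/q)` with `q > 1`, and it diverges at `∞` because `G(a) ≤ a/c₂` when
`K ≤ 1`; so the branch is defined for all times `t ≥ 0`. Reflecting it evenly about `c₃` gives the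
profile, which is `C²` across `c₃` since both `α' = ±G(α)` and `α'' = K (G(α)² + G(α)^(2-q)) / α`
are continuous there (this is where `q ≤ 2` enters). The curvature identity is then algebra. -/

open Real Set Filter Topology MeasureTheory

lemma mul_one_sub_inv_le_rpow_sub_one {y r : ℝ} (hy : 0 < y) (hr : 0 ≤ r) :
    r * (1 - y⁻¹) ≤ y ^ r - 1 := by
  have hlog : r * (1 - y⁻¹) ≤ log y * r := by
    rw [mul_comm]; exact mul_le_mul_of_nonneg_right (one_sub_inv_le_log_of_pos hy) hr
  linarith [rpow_def_of_pos hy r, add_one_le_exp (log y * r)]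

lemma continuousOn_primitive_Ici {E : Type*} [NormedAddCommGroup E] [NormedSpace ℝ E]
    {f : ℝ → E} {a : ℝ} (hf : ∀ x, a ≤ x → IntervalIntegrable f volume a x) :
    ContinuousOn (fun x => ∫ t in a..x, f t) (Ici a) := by
  intro x (hx : a ≤ x)
  have hx₁ : a ≤ x + 1 := by linarith
  have h := intervalIntegral.continuousOn_primitive_interval' (hf _ hx₁) left_mem_uIcc
  rw [uIcc_of_le hx₁, ← Ici_inter_Iic] at h
  exact (h x ⟨hx, mem_Iic.2 (by linarith)⟩).mono_of_mem_nhdsWithin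
    (inter_mem_nhdsWithin _ (Iic_mem_nhds (by linarith)))

section Reflection

variable {f g h : ℝ → ℝ} {c : ℝ}

noncomputable def oddReflection (g : ℝ → ℝ) (c u : ℝ) : ℝ := if c ≤ u then g (u - c) else -g (c - u)

lemma abs_oddReflection (u : ℝ) : |oddReflection g c u| = |g (|u - c|)| := by
  unfold oddReflection
  split_ifs with hu
  · rw [abs_of_nonneg (sub_nonneg.2 hu)]
  · rw [abs_neg, abs_sub_comm, abs_of_pos (sub_pos.2 (not_le.1 hu))]

lemma continuous_oddReflection (hg : ContinuousOn g (Ici 0)) (hg₀ : g 0 = 0) :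
    Continuous (oddReflection g c) :=
  have hright : ContinuousOn (fun u => g (u - c)) {u | c ≤ u} :=
    hg.comp (by fun_prop) fun _ hu => mem_Ici.2 (sub_nonneg.2 hu)
  have hleft : ContinuousOn (fun u => g (c - u)) {u | u ≤ c} :=
    hg.comp (by fun_prop) fun _ hu => mem_Ici.2 (sub_nonneg.2 hu)
  continuous_if_le continuous_const continuous_id hright hleft.neg fun u hu => by simp [← hu, hg₀]

lemma hasDerivAt_comp_abs_sub (hf : Continuous f) (hg : ContinuousOn g (Ici 0)) (hg₀ : g 0 = 0)
    (hfg : ∀ t, 0 < t → HasDerivAt f (g t) t) (u : ℝ) :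
    HasDerivAt (fun u => f |u - c|) (oddReflection g c u) u := by
  refine hasDerivAt_of_hasDerivAt_of_ne' (x := c) (fun u hu => ?_)
    (by fun_prop : Continuous fun u => f |u - c|).continuousAt
    (continuous_oddReflection hg hg₀).continuousAt u
  rcases hu.lt_or_gt with hu | hu
  · rw [oddReflection, if_neg hu.not_ge]
    refine ((hfg _ (sub_pos.2 hu)).comp_const_sub c u).congr_of_eventuallyEq ?_
    filter_upwards [eventually_lt_nhds hu] with y hy
    rw [abs_sub_comm, abs_of_pos (sub_pos.2 hy)]
  · rw [oddReflection, if_pos hu.le]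
    refine ((hfg _ (sub_pos.2 hu)).comp_sub_const u c).congr_of_eventuallyEq ?_
    filter_upwards [eventually_gt_nhds hu] with y hy
    rw [abs_of_pos (sub_pos.2 hy)]

lemma hasDerivAt_oddReflection (hg : ContinuousOn g (Ici 0)) (hg₀ : g 0 = 0)
    (hh : ContinuousOn h (Ici 0)) (hgh : ∀ t, 0 < t → HasDerivAt g (h t) t) (u : ℝ) :
    HasDerivAt (oddReflection g c) (h |u - c|) u := by
  refine hasDerivAt_of_hasDerivAt_of_ne' (x := c) (fun u hu => ?_)
    (continuous_oddReflection hg hg₀).continuousAt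
    ((hh.comp_continuous (by fun_prop : Continuous fun u => |u - c|)
      fun _ => mem_Ici.2 (abs_nonneg _)).continuousAt) u
  rcases hu.lt_or_gt with hu | hu
  · rw [Function.comp_apply, abs_sub_comm, abs_of_pos (sub_pos.2 hu), ← neg_neg (h (c - u))]
    refine ((hgh _ (sub_pos.2 hu)).comp_const_sub c u).neg.congr_of_eventuallyEq ?_
    filter_upwards [eventually_lt_nhds hu] with y hy
    rw [oddReflection, if_neg hy.not_ge, Pi.neg_apply]
  · rw [Function.comp_apply, abs_of_pos (sub_pos.2 hu)]
    refine ((hgh _ (sub_pos.2 hu)).comp_sub_const u c).congr_of_eventuallyEq ?_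
    filter_upwards [eventually_gt_nhds hu] with y hy
    rw [oddReflection, if_pos hy.le]

lemma contDiff_two_of_hasDerivAt {f f' f'' : ℝ → ℝ} (hf : ∀ x, HasDerivAt f (f' x) x)
    (hf' : ∀ x, HasDerivAt f' (f'' x) x) (hf'' : Continuous f'') : ContDiff ℝ 2 f := by
  rw [show (2 : WithTop ℕ∞) = 1 + 1 from rfl, contDiff_succ_iff_deriv]
  refine ⟨fun x => (hf x).differentiableAt, by simp, ?_⟩
  rw [funext fun x => (hf x).deriv, contDiff_one_iff_deriv, funext fun x => (hf' x).deriv]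
  exact ⟨fun x => (hf' x).differentiableAt, hf''⟩

end Reflection

namespace HomogeneousProfile

noncomputable def slopeOfHeight (c₂ q K a : ℝ) : ℝ := ((a / c₂) ^ (q * K) - 1) ^ q⁻¹

noncomputable def accelOfHeight (c₂ q K a : ℝ) : ℝ :=
  K * (slopeOfHeight c₂ q K a ^ 2 + slopeOfHeight c₂ q K a ^ (2 - q)) / a

variable {c₂ q K a : ℝ}

lemma continuous_slopeOfHeight (hq : 0 ≤ q) (hK : 0 ≤ K) : Continuous (slopeOfHeight c₂ q K) :=
  (continuous_rpow_const (inv_nonneg.2 hq)).comp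
    (((continuous_rpow_const (mul_nonneg hq hK)).comp (continuous_id.div_const c₂)).sub
      continuous_const)

lemma slopeOfHeight_self (hc : c₂ ≠ 0) (hq : q ≠ 0) : slopeOfHeight c₂ q K c₂ = 0 := by
  simp [slopeOfHeight, div_self hc, hq]

lemma one_le_rpow_div (hc : 0 < c₂) (hqK : 0 ≤ q * K) (ha : c₂ ≤ a) : 1 ≤ (a / c₂) ^ (q * K) :=
  one_le_rpow ((one_le_div hc).2 ha) hqK

lemma slopeOfHeight_nonneg (hc : 0 < c₂) (hq : 0 ≤ q) (hK : 0 ≤ K) (ha : c₂ ≤ a) :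
    0 ≤ slopeOfHeight c₂ q K a :=
  rpow_nonneg (sub_nonneg.2 (one_le_rpow_div hc (mul_nonneg hq hK) ha)) _

lemma slopeOfHeight_pos (hc : 0 < c₂) (hq : 0 < q) (hK : 0 < K) (ha : c₂ < a) :
    0 < slopeOfHeight c₂ q K a :=
  rpow_pos_of_pos (sub_pos.2 (one_lt_rpow ((one_lt_div hc).2 ha) (mul_pos hq hK))) _

lemma slopeOfHeight_le_div (hc : 0 < c₂) (hq : 0 < q) (hK : 0 ≤ K) (hK1 : K ≤ 1)
    (ha : c₂ ≤ a) : slopeOfHeight c₂ q K a ≤ a / c₂ := by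
  have hb : 1 ≤ a / c₂ := (one_le_div hc).2 ha
  have hle : (a / c₂) ^ (q * K) - 1 ≤ (a / c₂) ^ q := by
    have := rpow_le_rpow_of_exponent_le hb (mul_le_of_le_one_right hq.le hK1)
    linarith
  calc slopeOfHeight c₂ q K a ≤ ((a / c₂) ^ q) ^ q⁻¹ :=
        rpow_le_rpow (sub_nonneg.2 (one_le_rpow_div hc (mul_nonneg hq.le hK) ha)) hle
          (inv_nonneg.2 hq.le)
    _ = a / c₂ := rpow_rpow_inv (by positivity) hq.ne'

lemma rpow_le_slopeOfHeight (hc : 0 < c₂) (hq : 0 < q) (hK : 0 ≤ K) (ha : c₂ ≤ a) :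
    (q * K * (1 - c₂ / a)) ^ q⁻¹ ≤ slopeOfHeight c₂ q K a := by
  have ha₀ : 0 < a := hc.trans_le ha
  have hbase : 0 ≤ q * K * (1 - c₂ / a) :=
    mul_nonneg (mul_nonneg hq.le hK) (sub_nonneg.2 ((div_le_one ha₀).2 ha))
  refine rpow_le_rpow hbase ?_ (inv_nonneg.2 hq.le)
  simpa [inv_div] using
    mul_one_sub_inv_le_rpow_sub_one (div_pos ha₀ hc) (mul_nonneg hq.le hK)

lemma hasDerivAt_slopeOfHeight (hc : 0 < c₂) (hq : 0 < q) (hK : 0 < K) (ha : c₂ < a) :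
    HasDerivAt (slopeOfHeight c₂ q K) (accelOfHeight c₂ q K a / slopeOfHeight c₂ q K a) a := by
  have hb : 0 < a / c₂ := div_pos (hc.trans ha) hc
  set F := (a / c₂) ^ (q * K) - 1 with hF
  have hF₀ : 0 < F := sub_pos.2 (one_lt_rpow ((one_lt_div hc).2 ha) (mul_pos hq hK))
  have hderiv : HasDerivAt (slopeOfHeight c₂ q K)
      (1 / c₂ * (q * K) * (a / c₂) ^ (q * K - 1) * q⁻¹ * F ^ (q⁻¹ - 1)) a :=
    ((((hasDerivAt_id a).div_const c₂).rpow_const (Or.inl hb.ne')).sub_const 1).rpow_const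
      (Or.inl hF₀.ne')
  refine hderiv.congr_deriv ?_
  set G := slopeOfHeight c₂ q K a
  have hG : G = F ^ q⁻¹ := rfl
  have hG₀ : 0 < G := rpow_pos_of_pos hF₀ _
  have hGq : G ^ q = F := by rw [hG, rpow_inv_rpow hF₀.le hq.ne']
  have hG2q : G ^ (2 - q) = G ^ 2 / F := by rw [rpow_sub hG₀, hGq, rpow_two]
  have hFq : F ^ (q⁻¹ - 1) = G / F := by rw [rpow_sub_one hF₀.ne', ← hG]
  have hpow : (a / c₂) ^ (q * K - 1) = (F + 1) / (a / c₂) := by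
    rw [rpow_sub_one hb.ne', hF, sub_add_cancel]
  rw [accelOfHeight, hG2q, hFq, hpow]
  field_simp
  ring

lemma hasDerivAt_slopeOfHeight_comp {A : ℝ → ℝ} {t : ℝ} (hc : 0 < c₂) (hq : 0 < q) (hK : 0 < K)
    (hAt : c₂ < A t) (hA : HasDerivAt A (slopeOfHeight c₂ q K (A t)) t) :
    HasDerivAt (slopeOfHeight c₂ q K ∘ A) (accelOfHeight c₂ q K (A t)) t := by
  have h := (hasDerivAt_slopeOfHeight hc hq hK hAt).comp t hA
  rwa [div_mul_cancel₀ _ (slopeOfHeight_pos hc hq hK hAt).ne'] at h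

lemma continuousOn_accelOfHeight (hq : 0 ≤ q) (hq2 : q ≤ 2) (hK : 0 ≤ K) :
    ContinuousOn (accelOfHeight c₂ q K) (Ioi 0) := by
  have hG := continuous_slopeOfHeight (c₂ := c₂) hq hK
  refine ((continuous_const.mul ((hG.pow 2).add
    ((continuous_rpow_const (sub_nonneg.2 hq2)).comp hG))).continuousOn).div continuousOn_id ?_
  exact fun a ha => (mem_Ioi.1 ha).ne'

lemma intervalIntegrable_inv_slopeOfHeight (hc : 0 < c₂) (hq : 1 < q) (hK : 0 < K) {x : ℝ}
    (hx : c₂ ≤ x) : IntervalIntegrable (fun s => (slopeOfHeight c₂ q K s)⁻¹) volume c₂ x := by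
  have hq₀ : 0 < q := one_pos.trans hq
  set e := q * K / x
  have he : 0 < e := by have := hc.trans_le hx; positivity
  have hmajorant : IntervalIntegrable (fun s => e ^ (-q⁻¹) * (s - c₂) ^ (-q⁻¹)) volume c₂ x := by
    have h := (intervalIntegral.intervalIntegrable_rpow' (r := -q⁻¹) (a := 0) (b := x - c₂)
      (by simpa using inv_lt_one_of_one_lt₀ hq)).comp_sub_right c₂
    simp only [zero_add, sub_add_cancel] at h
    exact h.const_mul _
  refine hmajorant.mono_fun
    ((continuous_slopeOfHeight hq₀.le hK.le).measurable.inv.aestronglyMeasurable) ?_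
  rw [uIoc_of_le hx]
  refine (ae_restrict_iff' measurableSet_Ioc).2 (ae_of_all _ fun s ⟨hs₁, hs₂⟩ => ?_)
  have hs₀ : 0 < s := hc.trans hs₁
  have hlower : (e * (s - c₂)) ^ q⁻¹ ≤ slopeOfHeight c₂ q K s := by
    refine le_trans (rpow_le_rpow (by positivity) ?_ (inv_nonneg.2 hq₀.le))
      (rpow_le_slopeOfHeight hc hq₀ hK.le hs₁.le)
    rw [one_sub_div hs₀.ne', ← mul_div_assoc, mul_div_right_comm]
    exact mul_le_mul_of_nonneg_right (div_le_div_of_nonneg_left (by positivity) hs₀ hs₂)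
      (by linarith)
  have hlower₀ : 0 < (e * (s - c₂)) ^ q⁻¹ := rpow_pos_of_pos (by nlinarith) _
  dsimp only
  rw [Real.norm_of_nonneg (inv_nonneg.2 (hlower₀.trans_le hlower).le),
    Real.norm_of_nonneg (by positivity), ← mul_rpow he.le (by linarith), rpow_neg (by positivity)]
  exact inv_anti₀ hlower₀ hlower

-- Continued linearly below `c₂` only to make it an increasing bijection of `ℝ`.
noncomputable def timeToHeight (c₂ q K x : ℝ) : ℝ :=
  if c₂ ≤ x then ∫ s in c₂..x, (slopeOfHeight c₂ q K s)⁻¹ else x - c₂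

lemma timeToHeight_self : timeToHeight c₂ q K c₂ = 0 := by simp [timeToHeight]

lemma timeToHeight_of_le {x : ℝ} (hx : c₂ ≤ x) :
    timeToHeight c₂ q K x = ∫ s in c₂..x, (slopeOfHeight c₂ q K s)⁻¹ := if_pos hx

lemma continuous_timeToHeight (hc : 0 < c₂) (hq : 1 < q) (hK : 0 < K) :
    Continuous (timeToHeight c₂ q K) :=
  continuous_if_le continuous_const continuous_id
    (continuousOn_primitive_Ici fun _ hx => intervalIntegrable_inv_slopeOfHeight hc hq hK hx)
    (continuous_id.sub continuous_const).continuousOn (fun x hx => by simp [← hx])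

lemma strictMono_timeToHeight (hc : 0 < c₂) (hq : 1 < q) (hK : 0 < K) :
    StrictMono (timeToHeight c₂ q K) := by
  refine StrictMonoOn.Iic_union_Ici (a := c₂) (fun x hx y hy hxy => ?_) (fun x hx y hy hxy => ?_)
  · rcases (mem_Iic.1 hy).eq_or_lt with rfl | hy'
    · simp [timeToHeight, not_le.2 hxy, hxy]
    · simp [timeToHeight, not_le.2 hy', not_le.2 (hxy.trans hy'), hxy]
  · rw [timeToHeight_of_le hx, timeToHeight_of_le hy, ← sub_pos,
      intervalIntegral.integral_interval_sub_left
        (intervalIntegrable_inv_slopeOfHeight hc hq hK hy)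
        (intervalIntegrable_inv_slopeOfHeight hc hq hK hx)]
    refine intervalIntegral.intervalIntegral_pos_of_pos_on ?_ (fun s hs => ?_) hxy
    · exact (intervalIntegrable_inv_slopeOfHeight hc hq hK hy).mono_set
        (by rw [uIcc_of_le hxy.le, uIcc_of_le (hx.trans hxy.le)]; exact Icc_subset_Icc_left hx)
    · exact inv_pos.2 (slopeOfHeight_pos hc (one_pos.trans hq) hK (lt_of_le_of_lt hx hs.1))

lemma log_le_timeToHeight (hc : 0 < c₂) (hq : 1 < q) (hK : 0 < K) (hK1 : K ≤ 1) {x : ℝ}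
    (hx : c₂ ≤ x) : c₂ * log (x / c₂) ≤ timeToHeight c₂ q K x := by
  have hq₀ : 0 < q := one_pos.trans hq
  have hzero : (0 : ℝ) ∉ uIcc c₂ x := by rw [uIcc_of_le hx]; exact fun h => hc.not_ge h.1
  rw [timeToHeight_of_le hx, ← integral_inv hzero, ← intervalIntegral.integral_const_mul]
  refine intervalIntegral.integral_mono_on_of_le_Ioo hx
    ((intervalIntegral.intervalIntegrable_inv (fun _ hs h => hzero (h ▸ hs))
      continuousOn_id).const_mul _)
    (intervalIntegrable_inv_slopeOfHeight hc hq hK hx) fun s hs => ?_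
  calc c₂ * s⁻¹ = (s / c₂)⁻¹ := by rw [inv_div, div_eq_mul_inv]
    _ ≤ (slopeOfHeight c₂ q K s)⁻¹ :=
      inv_anti₀ (slopeOfHeight_pos hc hq₀ hK hs.1) (slopeOfHeight_le_div hc hq₀ hK.le hK1 hs.1.le)

lemma tendsto_timeToHeight_atTop (hc : 0 < c₂) (hq : 1 < q) (hK : 0 < K) (hK1 : K ≤ 1) :
    Tendsto (timeToHeight c₂ q K) atTop atTop :=
  tendsto_atTop_mono' _ (eventually_atTop.2 ⟨c₂, fun _ hx => log_le_timeToHeight hc hq hK hK1 hx⟩)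
    ((tendsto_log_atTop.comp (tendsto_id.atTop_div_const hc)).const_mul_atTop hc)

lemma tendsto_timeToHeight_atBot : Tendsto (timeToHeight c₂ q K) atBot atBot := by
  refine (tendsto_atBot_add_const_right _ (-c₂) tendsto_id).congr' ?_
  filter_upwards [eventually_lt_atBot c₂] with x hx
  simp [timeToHeight, not_le.2 hx, sub_eq_add_neg]

lemma hasDerivAt_timeToHeight (hc : 0 < c₂) (hq : 1 < q) (hK : 0 < K) (ha : c₂ < a) :
    HasDerivAt (timeToHeight c₂ q K) (slopeOfHeight c₂ q K a)⁻¹ a := by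
  have hG := continuous_slopeOfHeight (c₂ := c₂) (one_pos.trans hq).le hK.le
  have hGa := (slopeOfHeight_pos hc (one_pos.trans hq) hK ha).ne'
  refine (intervalIntegral.integral_hasDerivAt_right
    (intervalIntegrable_inv_slopeOfHeight hc hq hK ha.le)
    (hG.measurable.inv.stronglyMeasurable.stronglyMeasurableAtFilter)
    (hG.continuousAt.inv₀ hGa)).congr_of_eventuallyEq ?_
  filter_upwards [eventually_ge_nhds ha] with x hx
  exact timeToHeight_of_le hx

lemma exists_heightOfTime (hc : 0 < c₂) (hq : 1 < q) (hK : 0 < K) (hK1 : K ≤ 1) :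
    ∃ A : ℝ → ℝ, Continuous A ∧ StrictMono A ∧ A 0 = c₂ ∧ Tendsto A atTop atTop ∧
      ∀ t, 0 < t → HasDerivAt A (slopeOfHeight c₂ q K (A t)) t := by
  let e := StrictMono.orderIsoOfSurjective _ (strictMono_timeToHeight hc hq hK)
    ((continuous_timeToHeight hc hq hK).surjective (tendsto_timeToHeight_atTop hc hq hK hK1)
      tendsto_timeToHeight_atBot)
  have hA₀ : e.symm 0 = c₂ := e.symm_apply_eq.2 timeToHeight_self.symm
  refine ⟨e.symm, e.symm.continuous, e.symm.strictMono, hA₀, e.symm.tendsto_atTop,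
    fun t ht => ?_⟩
  have hAt : c₂ < e.symm t := hA₀ ▸ e.symm.strictMono ht
  simpa using HasDerivAt.of_local_left_inverse e.symm.continuous.continuousAt
    (hasDerivAt_timeToHeight hc hq hK hAt)
    (inv_ne_zero (slopeOfHeight_pos hc (one_pos.trans hq) hK hAt).ne')
    (Eventually.of_forall e.apply_symm_apply)

theorem exists_even_solution (hc : 0 < c₂) (hq : 1 < q) (hq2 : q ≤ 2) (hK : 0 < K)
    (hK1 : K ≤ 1) (c₃ : ℝ) :
    ∃ α : ℝ → ℝ, ContDiff ℝ 2 α ∧ (∀ u, c₂ ≤ α u) ∧ α c₃ = c₂ ∧ deriv α c₃ = 0 ∧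
      (∀ u, c₃ < u → 0 < deriv α u) ∧ (∀ u, u < c₃ → deriv α u < 0) ∧
      Tendsto α atTop atTop ∧ Tendsto α atBot atTop ∧
      ∀ u, α u * deriv (deriv α) u = K * (deriv α u ^ 2 + |deriv α u| ^ (2 - q)) := by
  have hq₀ : 0 < q := one_pos.trans hq
  obtain ⟨A, hA, hA_mono, hA₀, hA_top, hA'⟩ := exists_heightOfTime hc hq hK hK1
  have hA_ge (t : ℝ) (ht : 0 ≤ t) : c₂ ≤ A t := hA₀ ▸ hA_mono.monotone ht
  have hA_gt (t : ℝ) (ht : 0 < t) : c₂ < A t := hA₀ ▸ hA_mono ht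
  have hGA : ContinuousOn (slopeOfHeight c₂ q K ∘ A) (Ici 0) :=
    ((continuous_slopeOfHeight hq₀.le hK.le).comp hA).continuousOn
  have hGA₀ : (slopeOfHeight c₂ q K ∘ A) 0 = 0 := by simp [hA₀, slopeOfHeight_self hc.ne' hq₀.ne']
  have hHA : ContinuousOn (accelOfHeight c₂ q K ∘ A) (Ici 0) :=
    (continuousOn_accelOfHeight hq₀.le hq2 hK.le).comp hA.continuousOn
      fun t ht => hc.trans_le (hA_ge t ht)
  have hα' := hasDerivAt_comp_abs_sub (c := c₃) hA hGA hGA₀ hA'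
  have hα'' := hasDerivAt_oddReflection (c := c₃) hGA hGA₀ hHA fun t ht =>
    hasDerivAt_slopeOfHeight_comp hc hq₀ hK (hA_gt t ht) (hA' t ht)
  have hderiv : deriv (fun u => A |u - c₃|) = oddReflection (slopeOfHeight c₂ q K ∘ A) c₃ :=
    funext fun u => (hα' u).deriv
  refine ⟨fun u => A |u - c₃|, contDiff_two_of_hasDerivAt hα' hα''
    (hHA.comp_continuous (by fun_prop) fun _ => mem_Ici.2 (abs_nonneg _)),
    fun u => hA_ge _ (abs_nonneg _), by simp [hA₀], ?_, fun u hu => ?_, fun u hu => ?_, ?_, ?_,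
    fun u => ?_⟩
  · simpa [hderiv, oddReflection] using hGA₀
  · rw [hderiv, oddReflection, if_pos hu.le]
    exact slopeOfHeight_pos hc hq₀ hK (hA_gt _ (sub_pos.2 hu))
  · rw [hderiv, oddReflection, if_neg hu.not_ge, neg_lt_zero]
    exact slopeOfHeight_pos hc hq₀ hK (hA_gt _ (sub_pos.2 hu))
  · exact hA_top.comp (tendsto_abs_atTop_atTop.comp (tendsto_atTop_add_const_right _ _ tendsto_id))
  · exact hA_top.comp (tendsto_abs_atBot_atTop.comp (tendsto_atBot_add_const_right _ _ tendsto_id))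
  · have hA_pos : 0 < A |u - c₃| := hc.trans_le (hA_ge _ (abs_nonneg _))
    simp only [hderiv, (hα'' u).deriv, ← sq_abs (oddReflection _ _ _), abs_oddReflection,
      Function.comp_apply]
    rw [abs_of_nonneg (slopeOfHeight_nonneg hc hq₀.le hK.le (hA_ge _ (abs_nonneg _))),
      accelOfHeight]
    field_simp

end HomogeneousProfile

section Curvature

variable {m lam a w D : ℝ}

noncomputable def principalCurvature₁ (m α' α'' : ℝ) : ℝ :=
  (1 / (2 * m - 1)) * (|α'| ^ ((2 * m) / (2 * m - 1)) + 1) ^ (-(2 * m + 1) / (2 * m)) *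
    |α'| ^ (-(2 * m - 2) / (2 * m - 1)) * α''

noncomputable def principalCurvature₂ (m α α' : ℝ) : ℝ :=
  -(1 / α) * (|α'| ^ ((2 * m) / (2 * m - 1)) + 1) ^ (-(1 : ℝ) / (2 * m))

lemma principalCurvature₁_add_mul_principalCurvature₂_eq_zero (hm₀ : m ≠ 0)
    (hm₁ : 2 * m - 1 ≠ 0) (ha : a ≠ 0) (hw : w ≠ 0)
    (hode : a * D = (2 * m - 1) * lam * (w ^ 2 + |w| ^ ((2 * m - 2) / (2 * m - 1)))) :
    principalCurvature₁ m w D + lam * principalCurvature₂ m a w = 0 := by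
  have hw₀ : 0 < |w| := abs_pos.2 hw
  set P := |w| ^ ((2 * m - 2) / (2 * m - 1))
  set B := |w| ^ ((2 * m) / (2 * m - 1)) + 1
  have hB : 0 < B := by positivity
  have hw2 : w ^ 2 = P * |w| ^ ((2 * m) / (2 * m - 1)) := by
    rw [← rpow_add hw₀, ← add_div, show 2 * m - 2 + 2 * m = 2 * (2 * m - 1) by ring,
      mul_div_cancel_right₀ _ hm₁, rpow_two, sq_abs]
  have hP : |w| ^ (-(2 * m - 2) / (2 * m - 1)) * P = 1 := by
    rw [← rpow_add hw₀, neg_div, neg_add_cancel, rpow_zero]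
  have hBpow : B ^ (-(2 * m + 1) / (2 * m)) * B = B ^ (-(1 : ℝ) / (2 * m)) := by
    rw [← rpow_add_one hB.ne']
    congr 1
    field_simp
    ring
  have hD : D = (2 * m - 1) * lam * (P * B) / a := by
    rw [eq_div_iff ha, mul_comm, hode, hw2]
    ring
  rw [principalCurvature₁, principalCurvature₂, hD]
  calc _ = lam / a * ((1 / (2 * m - 1)) * (2 * m - 1)) *
        ((B ^ (-(2 * m + 1) / (2 * m)) * B) * (|w| ^ (-(2 * m - 2) / (2 * m - 1)) * P)) -
        lam / a * B ^ (-(1 : ℝ) / (2 * m)) := by ring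
    _ = 0 := by rw [hBpow, hP, one_div_mul_cancel hm₁]; ring

end Curvature

/-- (Theorem 5.3) For `0 < (2m−1)λ ≤ 1`, `c₂ > 0` and `c₃ ∈ ℝ`, there is a `C²`
function `α̂` on `ℝ` with minimum value `c₂` at `c₃`, tending to `∞` at `±∞`, solving
the ODE `α̂ α̂'' = (2m−1)λ (α̂'² + |α̂'|^{(2m−2)/(2m−1)})`; hence the rotational surface
`(α̂(u) cos v, α̂(u) sin v, u)` satisfies `k₁ + λk₂ = 0` wherever `α̂' ≠ 0`. -/
theorem exists_profile_homogeneous_small_lambda (m : ℕ) (hm : 2 ≤ m) (lam c₂ c₃ : ℝ)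
    (hlam₀ : 0 < (2 * (m : ℝ) - 1) * lam) (hlam₁ : (2 * (m : ℝ) - 1) * lam ≤ 1)
    (hc : 0 < c₂) :
    ∃ αh : ℝ → ℝ,
      ContDiff ℝ 2 αh ∧
      (∀ u : ℝ, c₂ ≤ αh u) ∧
      αh c₃ = c₂ ∧
      deriv αh c₃ = 0 ∧
      (∀ u : ℝ, c₃ < u → 0 < deriv αh u) ∧
      (∀ u : ℝ, u < c₃ → deriv αh u < 0) ∧
      Filter.Tendsto αh Filter.atTop Filter.atTop ∧
      Filter.Tendsto αh Filter.atBot Filter.atTop ∧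
      (∀ u : ℝ,
        αh u * deriv (deriv αh) u = (2 * (m : ℝ) - 1) * lam *
          ((deriv αh u) ^ 2 + |deriv αh u| ^ ((2 * (m : ℝ) - 2) / (2 * (m : ℝ) - 1)))) ∧
      (∀ u : ℝ, deriv αh u ≠ 0 →
        (1 / (2 * (m : ℝ) - 1)) *
            (|deriv αh u| ^ ((2 * (m : ℝ)) / (2 * (m : ℝ) - 1)) + 1)
              ^ (-(2 * (m : ℝ) + 1) / (2 * (m : ℝ))) *
            |deriv αh u| ^ (-(2 * (m : ℝ) - 2) / (2 * (m : ℝ) - 1)) *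
            deriv (deriv αh) u +
          lam * (-(1 / αh u) *
            (|deriv αh u| ^ ((2 * (m : ℝ)) / (2 * (m : ℝ) - 1)) + 1)
              ^ (-(1 : ℝ) / (2 * (m : ℝ)))) = 0) := by
  have hm' : (2 : ℝ) ≤ m := by exact_mod_cast hm
  have hm₁ : 0 < 2 * (m : ℝ) - 1 := by linarith
  have hexp : 2 - 2 * (m : ℝ) / (2 * m - 1) = (2 * m - 2) / (2 * m - 1) := by
    field_simp
    ring
  obtain ⟨α, hα, hα_ge, hα_c₃, hα'_c₃, hα'_pos, hα'_neg, hα_top, hα_bot, hode⟩ :=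
    HomogeneousProfile.exists_even_solution (q := 2 * m / (2 * m - 1)) hc
      ((one_lt_div hm₁).2 (by linarith)) ((div_le_iff₀ hm₁).2 (by linarith)) hlam₀ hlam₁ c₃
  simp only [hexp] at hode
  exact ⟨α, hα, hα_ge, hα_c₃, hα'_c₃, hα'_pos, hα'_neg, hα_top, hα_bot, hode, fun u hu =>
    principalCurvature₁_add_mul_principalCurvature₂_eq_zero (by positivity) hm₁.ne'
      (hc.trans_le (hα_ge u)).ne' hu (hode u)⟩
end

section
/- Let λ < 0 and c₂ > 0, and define G : (0, c₂) → ℝ by G(ρ) = ρ^{(2m−1)(−λ)} · (c₂^{2m(−λ)} − ρ^{2m(−λ)})^{−(2m−1)/(2m)}. Then G is differentiable on (0, c₂), and the limit lim_{α→0⁺} G'(α) exists in ℝ if and only if (2m−1)(−λ) ≥ 1. (Here G = u' for the profile u of the rotational surface solving k₁ + λk₂ = 0, so this is the criterion for the C²-extendability of the profile curve to the rotation axis.) -/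
/-!
Write `G(ρ) = ρ^a (C − ρ^b)^p` with `a = (2m−1)(−λ)`, `b = 2m(−λ)`, `C = c₂^b`. The product rule gives
`G'(ρ) = ρ^{a−1} H(ρ)`, where the bracket `H(ρ) = a (C − ρ^b)^p − b p ρ^b (C − ρ^b)^{p−1}` tends to
`a C^p ≠ 0` as `ρ → 0⁺`. So `G'` has a finite limit at `0⁺` exactly when `ρ^{a−1}` does, i.e. when
`a ≥ 1`.
-/

open Real Set Filter Topology

theorem tendsto_rpow_nhdsGT_zero {s : ℝ} (hs : 0 ≤ s) :
    Tendsto (fun x : ℝ => x ^ s) (𝓝[>] 0) (𝓝 (0 ^ s)) :=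
  (tendsto_nhdsWithin_of_tendsto_nhds tendsto_id).rpow_const (Or.inr hs)

theorem exists_tendsto_rpow_mul_nhdsGT_zero_iff {s l : ℝ} {h : ℝ → ℝ} (hl : l ≠ 0)
    (hh : Tendsto h (𝓝[>] 0) (𝓝 l)) :
    (∃ L, Tendsto (fun x => x ^ s * h x) (𝓝[>] 0) (𝓝 L)) ↔ 0 ≤ s := by
  constructor
  · rintro ⟨L, hL⟩
    by_contra! hs
    have hdiv : Tendsto (fun x => x ^ s * h x / h x) (𝓝[>] 0) (𝓝 (L / l)) := hL.div hh hl
    have hpow : Tendsto (fun x : ℝ => x ^ s) (𝓝[>] 0) (𝓝 (L / l)) := by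
      refine hdiv.congr' ?_
      filter_upwards [hh.eventually_ne hl] with x hx
      exact mul_div_cancel_right₀ _ hx
    exact not_tendsto_nhds_of_tendsto_atTop (tendsto_rpow_neg_nhdsGT_zero hs) _ hpow
  · intro hs
    exact ⟨_, (tendsto_rpow_nhdsGT_zero hs).mul hh⟩

section Profile

variable {a b p C : ℝ}

theorem hasDerivAt_rpow_mul_sub_rpow_rpow {x : ℝ} (hx : 0 < x) (hxC : x ^ b < C) :
    HasDerivAt (fun x => x ^ a * (C - x ^ b) ^ p)
      (x ^ (a - 1) * (a * (C - x ^ b) ^ p - b * p * x ^ b * (C - x ^ b) ^ (p - 1))) x := by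
  have hpow : x ^ a * x ^ (b - 1) = x ^ (a - 1) * x ^ b := by
    rw [← rpow_add hx, ← rpow_add hx]
    ring_nf
  refine ((hasDerivAt_rpow_const (p := a) (Or.inl hx.ne')).fun_mul
    (((hasDerivAt_rpow_const (p := b) (Or.inl hx.ne')).const_sub C).rpow_const
      (p := p) (Or.inl (sub_pos.2 hxC).ne'))).congr_deriv ?_
  linear_combination -(b * p * (C - x ^ b) ^ (p - 1)) * hpow

theorem exists_tendsto_deriv_rpow_mul_sub_rpow_rpow_iff (ha : a ≠ 0) (hb : 0 < b) (hC : 0 < C) :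
    (∃ L, Tendsto (deriv fun x => x ^ a * (C - x ^ b) ^ p) (𝓝[>] 0) (𝓝 L)) ↔ 1 ≤ a := by
  have hxb : Tendsto (fun x : ℝ => x ^ b) (𝓝[>] 0) (𝓝 0) := by
    simpa [zero_rpow hb.ne'] using tendsto_rpow_nhdsGT_zero hb.le
  have hsub : Tendsto (fun x : ℝ => C - x ^ b) (𝓝[>] 0) (𝓝 C) := by
    simpa using tendsto_const_nhds.sub hxb
  have hbracket : Tendsto (fun x => a * (C - x ^ b) ^ p - b * p * x ^ b * (C - x ^ b) ^ (p - 1))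
      (𝓝[>] 0) (𝓝 (a * C ^ p)) := by
    simpa using ((tendsto_const_nhds (x := a)).mul (hsub.rpow_const (Or.inl hC.ne'))).sub
      ((tendsto_const_nhds (x := b * p)).mul hxb |>.mul
        (hsub.rpow_const (p := p - 1) (Or.inl hC.ne')))
  have hderiv_eq : deriv (fun x => x ^ a * (C - x ^ b) ^ p) =ᶠ[𝓝[>] 0]
      fun x => x ^ (a - 1) * (a * (C - x ^ b) ^ p - b * p * x ^ b * (C - x ^ b) ^ (p - 1)) := by
    filter_upwards [self_mem_nhdsWithin, hxb.eventually (gt_mem_nhds hC)] with x hx hxC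
    exact (hasDerivAt_rpow_mul_sub_rpow_rpow hx hxC).deriv
  rw [exists_congr fun L => tendsto_congr' hderiv_eq,
    exists_tendsto_rpow_mul_nhdsGT_zero_iff (mul_ne_zero ha (rpow_pos_of_pos hC p).ne') hbracket,
    sub_nonneg]

end Profile

/-- For `λ < 0` and `c₂ > 0`, the function
`G(ρ) = ρ^{(2m−1)(−λ)} (c₂^{2m(−λ)} − ρ^{2m(−λ)})^{−(2m−1)/(2m)}` is differentiable on
`(0, c₂)`, and `G'(α)` has a finite limit as `α → 0⁺` if and only if
`(2m−1)(−λ) ≥ 1`. -/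
theorem deriv_limit_at_axis_iff (m : ℕ) (hm : 2 ≤ m) (lam c₂ : ℝ)
    (hlam : lam < 0) (hc : 0 < c₂)
    (G : ℝ → ℝ)
    (hG : ∀ ρ, G ρ = ρ ^ ((2 * (m : ℝ) - 1) * (-lam)) *
      (c₂ ^ (2 * (m : ℝ) * (-lam)) - ρ ^ (2 * (m : ℝ) * (-lam)))
        ^ (-(2 * (m : ℝ) - 1) / (2 * (m : ℝ)))) :
    (∀ ρ ∈ Set.Ioo (0 : ℝ) c₂, DifferentiableAt ℝ G ρ) ∧
    ((∃ L : ℝ, Filter.Tendsto (deriv G) (nhdsWithin 0 (Set.Ioi 0)) (nhds L)) ↔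
      1 ≤ (2 * (m : ℝ) - 1) * (-lam)) := by
  set a := (2 * (m : ℝ) - 1) * (-lam)
  set b := 2 * (m : ℝ) * (-lam)
  have hm' : (2 : ℝ) ≤ m := by exact_mod_cast hm
  have ha : 0 < a := mul_pos (by linarith) (by linarith)
  have hb : 0 < b := mul_pos (by linarith) (by linarith)
  rw [show G = _ from funext hG]
  refine ⟨fun ρ hρ => ?_, exists_tendsto_deriv_rpow_mul_sub_rpow_rpow_iff ha.ne' hb
    (rpow_pos_of_pos hc b)⟩
  exact (hasDerivAt_rpow_mul_sub_rpow_rpow hρ.1 (rpow_lt_rpow hρ.1.le hρ.2 hb)).differentiableAt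
end

section
/- Let λ < 0 and c₂ > 0, let u : (0, c₂) → ℝ be a C² function with u'(α) = α^{(2m−1)(−λ)} · (c₂^{2m(−λ)} − α^{2m(−λ)})^{−(2m−1)/(2m)} for all α ∈ (0, c₂), and let k₂(α) = −(1/α)(1 + u'(α)^{2m/(2m−1)})^{−1/(2m)} u'(α)^{1/(2m−1)}. Then the limit lim_{α→0⁺} k₂(α) exists in ℝ if and only if −λ ≥ 1; when −λ > 1 the limit is 0, and when −λ = 1 the limit is −1/c₂. -/
/-!
With `p = 2m`, `n = -λ` and `B = c₂^{pn} - α^{pn}`, the slope is `u' = α^{(p-1)n} B^{-(p-1)/p}`,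
so `u'^{1/(p-1)} = αⁿ B^{-1/p}` and `1 + u'^{p/(p-1)} = c₂^{pn} / B`. The powers of `B` cancel
and `k₂(α) = -c₂^{-n} α^{n-1}` on `(0, c₂)`; everything then reduces to the behaviour of
`α^{n-1}` as `α → 0⁺`.
-/

open Real Set Filter Topology

noncomputable def rotationalK₂ (p α s : ℝ) : ℝ :=
  -(1 / α) * (1 + s ^ (p / (p - 1))) ^ (-(1 : ℝ) / p) * s ^ ((1 : ℝ) / (p - 1))

noncomputable def profileSlope (p n c α : ℝ) : ℝ :=
  α ^ ((p - 1) * n) * (c ^ (p * n) - α ^ (p * n)) ^ (-(p - 1) / p)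

lemma rpow_mul_rpow_rpow {a b : ℝ} (ha : 0 ≤ a) (hb : 0 ≤ b) (x y z : ℝ) :
    (a ^ x * b ^ y) ^ z = a ^ (x * z) * b ^ (y * z) := by
  rw [mul_rpow (rpow_nonneg ha x) (rpow_nonneg hb y), ← rpow_mul ha, ← rpow_mul hb]

lemma rotationalK₂_profileSlope {p n α c : ℝ} (hp : 1 < p) (hn : 0 < n) (hα : 0 < α)
    (hαc : α < c) : rotationalK₂ p α (profileSlope p n c α) = -c ^ (-n) * α ^ (n - 1) := by
  have hc : 0 < c := hα.trans hαc
  have hp₀ : p ≠ 0 := by positivity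
  have hp₁ : p - 1 ≠ 0 := sub_ne_zero.2 hp.ne'
  set B := c ^ (p * n) - α ^ (p * n)
  have hB : 0 < B := sub_pos.2 (rpow_lt_rpow hα.le hαc (by positivity))
  have hslope_pow : profileSlope p n c α ^ (p / (p - 1)) = α ^ (p * n) * B⁻¹ := by
    rw [profileSlope, rpow_mul_rpow_rpow hα.le hB.le,
      show (p - 1) * n * (p / (p - 1)) = p * n by field_simp,
      show -(p - 1) / p * (p / (p - 1)) = -1 by field_simp, rpow_neg_one]
  have hslope_root : profileSlope p n c α ^ ((1 : ℝ) / (p - 1)) = α ^ n * B ^ (-(1 : ℝ) / p) := by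
    rw [profileSlope, rpow_mul_rpow_rpow hα.le hB.le,
      show (p - 1) * n * (1 / (p - 1)) = n by field_simp,
      show -(p - 1) / p * (1 / (p - 1)) = -1 / p by field_simp]
  have hsum : 1 + α ^ (p * n) * B⁻¹ = c ^ (p * n) / B := by
    field_simp
    ring
  have hsum_pow : (c ^ (p * n) / B) ^ (-(1 : ℝ) / p) = c ^ (-n) * B ^ (-(-(1 : ℝ) / p)) := by
    rw [div_rpow (by positivity) hB.le, ← rpow_mul hc.le, div_eq_mul_inv, ← rpow_neg hB.le,
      show p * n * (-1 / p) = -n by field_simp]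
  have hα_pow : α ^ (n - 1) = α ^ n / α := by rw [rpow_sub hα, rpow_one]
  rw [rotationalK₂, hslope_pow, hslope_root, hsum, hsum_pow, hα_pow]
  have hB_cancel : B ^ (-(-(1 : ℝ) / p)) * B ^ (-(1 : ℝ) / p) = 1 := by
    rw [← rpow_add hB, neg_add_cancel, rpow_zero]
  linear_combination (-(c ^ (-n)) * α ^ n / α) * hB_cancel

lemma tendsto_const_mul_rpow_nhdsGT_zero (C : ℝ) {q : ℝ} (hq : 0 ≤ q) :
    Tendsto (fun x : ℝ => C * x ^ q) (𝓝[>] 0) (𝓝 (C * 0 ^ q)) :=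
  ((continuousAt_rpow_const 0 q (Or.inr hq)).tendsto.mono_left nhdsWithin_le_nhds).const_mul C

lemma exists_tendsto_const_mul_rpow_nhdsGT_zero_iff {C : ℝ} (hC : C ≠ 0) (q : ℝ) :
    (∃ L, Tendsto (fun x : ℝ => C * x ^ q) (𝓝[>] 0) (𝓝 L)) ↔ 0 ≤ q := by
  refine ⟨fun ⟨L, hL⟩ => ?_, fun hq => ⟨_, tendsto_const_mul_rpow_nhdsGT_zero C hq⟩⟩
  by_contra! hq
  have hpow : Tendsto (fun x : ℝ => x ^ q) (𝓝[>] 0) (𝓝 (C⁻¹ * L)) :=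
    (hL.const_mul C⁻¹).congr fun x => inv_mul_cancel_left₀ hC _
  exact not_tendsto_nhds_of_tendsto_atTop (tendsto_rpow_neg_nhdsGT_zero hq) _ hpow

theorem k2_limit_at_axis_general (m : ℕ) (hm : 2 ≤ m) (lam c₂ : ℝ)
    (hlam : lam < 0) (hc : 0 < c₂)
    (u : ℝ → ℝ)
    (hu' : ∀ α ∈ Set.Ioo (0 : ℝ) c₂, deriv u α =
      α ^ ((2 * (m : ℝ) - 1) * (-lam)) *
        (c₂ ^ (2 * (m : ℝ) * (-lam)) - α ^ (2 * (m : ℝ) * (-lam)))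
          ^ (-(2 * (m : ℝ) - 1) / (2 * (m : ℝ))))
    (k₂ : ℝ → ℝ)
    (hk₂ : ∀ α, k₂ α =
      -(1 / α) * (1 + deriv u α ^ ((2 * (m : ℝ)) / (2 * (m : ℝ) - 1)))
          ^ (-(1 : ℝ) / (2 * (m : ℝ))) *
        deriv u α ^ ((1 : ℝ) / (2 * (m : ℝ) - 1))) :
    ((∃ L : ℝ, Filter.Tendsto k₂ (nhdsWithin 0 (Set.Ioi 0)) (nhds L)) ↔ 1 ≤ -lam) ∧
    (1 < -lam → Filter.Tendsto k₂ (nhdsWithin 0 (Set.Ioi 0)) (nhds 0)) ∧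
    (-lam = 1 → Filter.Tendsto k₂ (nhdsWithin 0 (Set.Ioi 0)) (nhds (-1 / c₂))) := by
  have hp : 1 < 2 * (m : ℝ) := by
    have : (2 : ℝ) ≤ m := by exact_mod_cast hm
    linarith
  have hk₂_eq : k₂ =ᶠ[𝓝[>] 0] fun α => -c₂ ^ (-(-lam)) * α ^ (-lam - 1) := by
    filter_upwards [Ioo_mem_nhdsGT hc] with α hα
    rw [hk₂ α, hu' α hα]
    exact rotationalK₂_profileSlope hp (neg_pos.2 hlam) hα.1 hα.2
  have hC : -c₂ ^ (-(-lam)) ≠ 0 := neg_ne_zero.2 (rpow_pos_of_pos hc _).ne'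
  refine ⟨?_, fun hlam₁ => ?_, fun hlam₁ => ?_⟩
  · simp_rw [tendsto_congr' hk₂_eq, exists_tendsto_const_mul_rpow_nhdsGT_zero_iff hC, sub_nonneg]
  · refine (tendsto_congr' hk₂_eq).2 ?_
    simpa [zero_rpow (sub_pos.2 hlam₁).ne'] using
      tendsto_const_mul_rpow_nhdsGT_zero (-c₂ ^ (-(-lam))) (sub_pos.2 hlam₁).le
  · refine (tendsto_congr' hk₂_eq).2 ?_
    simp [hlam₁, rpow_neg_one, div_eq_mul_inv]

/-- For the profile `u` of the rotational surface solving `k₁ + λk₂ = 0` with `λ < 0`,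
the principal curvature `k₂` extends continuously to the rotation axis `α = 0` if and
only if `−λ ≥ 1`; the limit is `0` when `−λ > 1` and `−1/c₂` when `−λ = 1`. -/
theorem k2_limit_at_axis (m : ℕ) (hm : 2 ≤ m) (lam c₂ : ℝ)
    (hlam : lam < 0) (hc : 0 < c₂)
    (u : ℝ → ℝ) (hu : ContDiffOn ℝ 2 u (Set.Ioo 0 c₂))
    (hu' : ∀ α ∈ Set.Ioo (0 : ℝ) c₂, deriv u α =
      α ^ ((2 * (m : ℝ) - 1) * (-lam)) *
        (c₂ ^ (2 * (m : ℝ) * (-lam)) - α ^ (2 * (m : ℝ) * (-lam)))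
          ^ (-(2 * (m : ℝ) - 1) / (2 * (m : ℝ))))
    (k₂ : ℝ → ℝ)
    (hk₂ : ∀ α, k₂ α =
      -(1 / α) * (1 + deriv u α ^ ((2 * (m : ℝ)) / (2 * (m : ℝ) - 1)))
          ^ (-(1 : ℝ) / (2 * (m : ℝ))) *
        deriv u α ^ ((1 : ℝ) / (2 * (m : ℝ) - 1))) :
    ((∃ L : ℝ, Filter.Tendsto k₂ (nhdsWithin 0 (Set.Ioi 0)) (nhds L)) ↔ 1 ≤ -lam) ∧
    (1 < -lam → Filter.Tendsto k₂ (nhdsWithin 0 (Set.Ioi 0)) (nhds 0)) ∧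
    (-lam = 1 → Filter.Tendsto k₂ (nhdsWithin 0 (Set.Ioi 0)) (nhds (-1 / c₂))) :=
  k2_limit_at_axis_general m hm lam c₂ hlam hc u hu' k₂ hk₂
end

section
/- (Theorem 6.1) Let μ ≠ 0. The rotational surface with profile u satisfies k₁(α) − k₂(α) = μ for all α ∈ I if and only if there exists a constant c₁ ∈ ℝ such that for all α ∈ I one has c₁ − μ·log α > 0, α·(c₁ − μ·log α) < 1, and u'(α) = α^{2m−1} (c₁ − μ·log α)^{2m−1} · (1 − α^{2m}(c₁ − μ·log α)^{2m})^{−(2m−1)/(2m)}. -/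
/-!
With `q = 2m` and `φ(p) = p^{1/(q-1)} (1 + p^{q/(q-1)})^{-1/q}` one has `k₂ = -φ(u')/α` and
`k₁ = -(φ ∘ u')'`, so `k₁ - k₂ = μ` is the linear equation `(φ(u')/α)' = -μ/α`, whose solutions
are `φ(u'(α)) = α (c₁ - μ log α)`. Writing `s = p^{q/(q-1)}`, `φ(p)^q = s/(1+s)`, so `φ` is a
bijection from `(0, ∞)` onto `(0, 1)` with inverse `t ↦ t^{q-1} (1 - t^q)^{-(q-1)/q}`.
-/

open Real Set

/-- For `q = 2` this is `sin ∘ arctan`, and `lpTanArcsin 2` is `tan ∘ arcsin`. -/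
noncomputable def lpSinArctan (q p : ℝ) : ℝ :=
  p ^ (1 / (q - 1)) * (1 + p ^ (q / (q - 1))) ^ (-1 / q)

noncomputable def lpTanArcsin (q t : ℝ) : ℝ := t ^ (q - 1) * (1 - t ^ q) ^ (-(q - 1) / q)

section LpSinArctan

variable {q p t : ℝ}

theorem lpSinArctan_eq_rpow (hq : 1 < q) (hp : 0 ≤ p) :
    lpSinArctan q p = (p ^ (q / (q - 1)) / (1 + p ^ (q / (q - 1)))) ^ q⁻¹ := by
  have hs : 0 ≤ p ^ (q / (q - 1)) := rpow_nonneg hp _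
  have h1s : 0 ≤ 1 + p ^ (q / (q - 1)) := by positivity
  rw [lpSinArctan, div_rpow hs h1s, ← rpow_mul hp, div_eq_mul_inv _ (_ ^ q⁻¹), ← rpow_neg h1s]
  congr 2 <;> field_simp [show q - 1 ≠ 0 by linarith]

theorem lpTanArcsin_eq_rpow (hq : 1 < q) (ht : 0 ≤ t) (ht₁ : t < 1) :
    lpTanArcsin q t = (t ^ q / (1 - t ^ q)) ^ ((q - 1) / q) := by
  have hr : 0 < 1 - t ^ q := sub_pos.2 (rpow_lt_one ht ht₁ (by linarith))
  rw [lpTanArcsin, div_rpow (rpow_nonneg ht _) hr.le, ← rpow_mul ht,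
    div_eq_mul_inv _ (_ ^ ((q - 1) / q)), ← rpow_neg hr.le]
  congr 2
  · field_simp
  · ring

theorem lpSinArctan_nonneg (hp : 0 ≤ p) : 0 ≤ lpSinArctan q p := by
  unfold lpSinArctan
  positivity

theorem lpSinArctan_pos (hp : 0 < p) : 0 < lpSinArctan q p := by
  unfold lpSinArctan
  positivity

theorem lpSinArctan_lt_one (hq : 1 < q) (hp : 0 ≤ p) : lpSinArctan q p < 1 := by
  rw [lpSinArctan_eq_rpow hq hp]
  have hs : 0 ≤ p ^ (q / (q - 1)) := rpow_nonneg hp _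
  exact rpow_lt_one (by positivity) ((div_lt_one (by positivity)).2 (by linarith))
    (by positivity)

theorem lpTanArcsin_lpSinArctan (hq : 1 < q) (hp : 0 ≤ p) :
    lpTanArcsin q (lpSinArctan q p) = p := by
  set s := p ^ (q / (q - 1))
  have h1s : 0 < 1 + s := by positivity
  have hφq : lpSinArctan q p ^ q = s / (1 + s) := by
    rw [lpSinArctan_eq_rpow hq hp, ← rpow_mul (by positivity), inv_mul_cancel₀ (by positivity),
      rpow_one]
  rw [lpTanArcsin_eq_rpow hq (lpSinArctan_nonneg hp) (lpSinArctan_lt_one hq hp), hφq,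
    show s / (1 + s) / (1 - s / (1 + s)) = s by field_simp; ring, ← rpow_mul hp]
  convert rpow_one p using 2
  field_simp [show q - 1 ≠ 0 by linarith]

theorem lpSinArctan_lpTanArcsin (hq : 1 < q) (ht : 0 ≤ t) (ht₁ : t < 1) :
    lpSinArctan q (lpTanArcsin q t) = t := by
  set r := t ^ q / (1 - t ^ q)
  have htq : 0 < 1 - t ^ q := sub_pos.2 (rpow_lt_one ht ht₁ (by linarith))
  have hr : 0 ≤ r := div_nonneg (rpow_nonneg ht _) htq.le
  have hψ : lpTanArcsin q t = r ^ ((q - 1) / q) := lpTanArcsin_eq_rpow hq ht ht₁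
  have hψq : lpTanArcsin q t ^ (q / (q - 1)) = r := by
    rw [hψ, ← rpow_mul hr]
    convert rpow_one r using 2
    field_simp [show q - 1 ≠ 0 by linarith]
  rw [lpSinArctan_eq_rpow hq (hψ ▸ rpow_nonneg hr _), hψq,
    show r / (1 + r) = t ^ q by simp only [r]; field_simp [htq.ne']; ring, ← rpow_mul ht]
  convert rpow_one t using 2
  field_simp

theorem lpSinArctan_eq_iff (hq : 1 < q) (hp : 0 < p) :
    lpSinArctan q p = t ↔ 0 < t ∧ t < 1 ∧ p = lpTanArcsin q t := by
  constructor
  · rintro rfl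
    exact ⟨lpSinArctan_pos hp, lpSinArctan_lt_one hq hp.le,
      (lpTanArcsin_lpSinArctan hq hp.le).symm⟩
  · rintro ⟨ht, ht₁, rfl⟩
    exact lpSinArctan_lpTanArcsin hq ht.le ht₁

theorem hasDerivAt_lpSinArctan (hq : 1 < q) (hp : 0 < p) :
    HasDerivAt (lpSinArctan q)
      (1 / (q - 1) * (1 + p ^ (q / (q - 1))) ^ (-(q + 1) / q) * p ^ (-(q - 2) / (q - 1))) p := by
  set s := p ^ (q / (q - 1))
  have h1s : 0 < 1 + s := by positivity
  have hq₀ : q ≠ 0 := by positivity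
  have hq₁ : q - 1 ≠ 0 := by linarith
  have hpow := hasDerivAt_rpow_const (p := 1 / (q - 1)) (Or.inl hp.ne')
  have hbase := ((hasDerivAt_rpow_const (p := q / (q - 1)) (Or.inl hp.ne')).const_add 1)
    |>.rpow_const (p := -1 / q) (Or.inl h1s.ne')
  refine (hpow.mul hbase).congr_deriv ?_
  have hs : p ^ (1 / (q - 1)) * p ^ (q / (q - 1) - 1) = p ^ (1 / (q - 1) - 1) * s := by
    rw [← rpow_add hp, ← rpow_add hp]; ring_nf
  have hc : (1 + s) ^ (-1 / q) = (1 + s) ^ (-1 / q - 1) * (1 + s) := by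
    rw [← rpow_add_one h1s.ne']; ring_nf
  have hbc : q / (q - 1) * (-1 / q) = -(1 / (q - 1)) := by field_simp
  have ha : 1 / (q - 1) - 1 = -(q - 2) / (q - 1) := by field_simp; ring
  have hc' : -1 / q - 1 = -(q + 1) / q := by field_simp; ring
  rw [hc, ← ha, ← hc']
  linear_combination (q / (q - 1) * (-1 / q) * (1 + s) ^ (-1 / q - 1)) * hs
    + ((1 + s) ^ (-1 / q - 1) * p ^ (1 / (q - 1) - 1) * s) * hbc

end LpSinArctan

theorem lpTanArcsin_two_mul_natCast {m : ℕ} (hm : 1 ≤ m) (t : ℝ) :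
    lpTanArcsin (2 * m) t =
      t ^ (2 * m - 1) * (1 - t ^ (2 * m)) ^ (-(2 * (m : ℝ) - 1) / (2 * (m : ℝ))) := by
  rw [lpTanArcsin, ← rpow_natCast, ← rpow_natCast, Nat.cast_sub (by omega)]
  push_cast
  rfl

theorem div_sub_eq_iff_exists_eq_mul_sub_mul_log {f f' : ℝ → ℝ} {s : Set ℝ} (hs : IsOpen s)
    (hs' : IsPreconnected s) (hs₀ : s ⊆ Ioi 0) (hf : ∀ x ∈ s, HasDerivAt f (f' x) x) (μ : ℝ) :
    (∀ x ∈ s, f x / x - f' x = μ) ↔ ∃ c, ∀ x ∈ s, f x = x * (c - μ * log x) := by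
  constructor
  · intro h
    have hψ : ∀ x ∈ s, HasDerivAt (fun y => f y / y + μ * log y) 0 x := by
      intro x hx
      have hx₀ : x ≠ 0 := (hs₀ hx).ne'
      refine (((hf x hx).div (hasDerivAt_id x) hx₀).add
        ((hasDerivAt_log hx₀).const_mul μ)).congr_deriv ?_
      rw [← h x hx, id]
      field_simp
      ring
    obtain ⟨c, hc⟩ := hs.exists_is_const_of_deriv_eq_zero hs'
      (fun x hx => (hψ x hx).differentiableAt.differentiableWithinAt)
      (fun x hx => (hψ x hx).deriv)
    refine ⟨c, fun x hx => ?_⟩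
    have hx₀ : x ≠ 0 := (hs₀ hx).ne'
    rw [← hc x hx]
    field_simp
    ring
  · rintro ⟨c, hc⟩ x hx
    have hx₀ : x ≠ 0 := (hs₀ hx).ne'
    have hline : HasDerivAt (fun y => y * (c - μ * log y)) (c - μ * log x - μ) x := by
      refine ((hasDerivAt_id x).mul
        (((hasDerivAt_log hx₀).const_mul μ).const_sub c)).congr_deriv ?_
      rw [id]
      field_simp
      ring
    have hf' : f' x = c - μ * log x - μ := (hf x hx).unique <|
      hline.congr_of_eventuallyEq (Filter.eventually_of_mem (hs.mem_nhds hx) hc)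
    rw [hf', hc x hx]
    field_simp
    ring

theorem inhomogeneous_linear_Weingarten_lambda_neg_one_iff_general (m : ℕ) (hm : 2 ≤ m)
    (a b : ℝ) (hI : Set.Ioo a b ⊆ Set.Ioi (0 : ℝ)) (u : ℝ → ℝ)
    (hu : ContDiffOn ℝ 2 u (Set.Ioo a b))
    (hu' : ∀ x ∈ Set.Ioo a b, 0 < deriv u x)
    (μ : ℝ)
    (k₁ k₂ : ℝ → ℝ)
    (hk₁ : ∀ x, k₁ x =
      -(1 / (2 * (m : ℝ) - 1)) *
        (1 + deriv u x ^ ((2 * (m : ℝ)) / (2 * (m : ℝ) - 1)))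
          ^ (-(2 * (m : ℝ) + 1) / (2 * (m : ℝ))) *
        deriv u x ^ (-(2 * (m : ℝ) - 2) / (2 * (m : ℝ) - 1)) *
        deriv (deriv u) x)
    (hk₂ : ∀ x, k₂ x =
      -(1 / x) * (1 + deriv u x ^ ((2 * (m : ℝ)) / (2 * (m : ℝ) - 1)))
          ^ (-(1 : ℝ) / (2 * (m : ℝ))) *
        deriv u x ^ ((1 : ℝ) / (2 * (m : ℝ) - 1))) :
    (∀ x ∈ Set.Ioo a b, k₁ x - k₂ x = μ) ↔
    ∃ c₁ : ℝ, ∀ x ∈ Set.Ioo a b,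
      0 < c₁ - μ * Real.log x ∧
      x * (c₁ - μ * Real.log x) < 1 ∧
      deriv u x = x ^ (2 * m - 1) * (c₁ - μ * Real.log x) ^ (2 * m - 1) *
        (1 - x ^ (2 * m) * (c₁ - μ * Real.log x) ^ (2 * m))
          ^ (-(2 * (m : ℝ) - 1) / (2 * (m : ℝ))) := by
  have hq : 1 < 2 * (m : ℝ) := by
    have : (2 : ℝ) ≤ m := by exact_mod_cast hm
    linarith
  have hu'' : ∀ x ∈ Ioo a b, HasDerivAt (deriv u) (deriv (deriv u) x) x := fun x hx =>
    (((hu.deriv_of_isOpen isOpen_Ioo (by norm_num)).differentiableOn one_ne_zero).differentiableAt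
      (isOpen_Ioo.mem_nhds hx)).hasDerivAt
  have hk₁' : ∀ x ∈ Ioo a b,
      HasDerivAt (fun y => lpSinArctan (2 * m) (deriv u y)) (-k₁ x) x := fun x hx =>
    ((hasDerivAt_lpSinArctan hq (hu' x hx)).comp x (hu'' x hx)).congr_deriv (by rw [hk₁]; ring)
  have hk₂' : ∀ x, k₂ x = -(lpSinArctan (2 * m) (deriv u x) / x) := fun x => by
    rw [hk₂, lpSinArctan]; ring
  calc (∀ x ∈ Ioo a b, k₁ x - k₂ x = μ)
      ↔ ∀ x ∈ Ioo a b, lpSinArctan (2 * m) (deriv u x) / x - -k₁ x = μ := by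
        simp only [hk₂', sub_neg_eq_add, add_comm]
    _ ↔ ∃ c, ∀ x ∈ Ioo a b, lpSinArctan (2 * m) (deriv u x) = x * (c - μ * log x) :=
        div_sub_eq_iff_exists_eq_mul_sub_mul_log isOpen_Ioo isPreconnected_Ioo hI hk₁' μ
    _ ↔ _ := by
        refine exists_congr fun c => forall₂_congr fun x hx => ?_
        rw [lpSinArctan_eq_iff hq (hu' x hx), lpTanArcsin_two_mul_natCast (by omega), mul_pow,
          mul_pow, mul_pos_iff_of_pos_left (hI hx)]

/-- (Theorem 6.1) The rotational surface `X(α,v) = (α cos v, α sin v, u(α))` satisfies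
`k₁ − k₂ = μ` for a nonzero constant `μ` if and only if there is a constant `c₁` with
`c₁ − μ log α > 0`, `α(c₁ − μ log α) < 1` and
`u'(α) = α^{2m−1}(c₁ − μ log α)^{2m−1} (1 − α^{2m}(c₁ − μ log α)^{2m})^{−(2m−1)/(2m)}`. -/
theorem inhomogeneous_linear_Weingarten_lambda_neg_one_iff (m : ℕ) (hm : 2 ≤ m)
    (a b : ℝ) (hI : Set.Ioo a b ⊆ Set.Ioi (0 : ℝ)) (u : ℝ → ℝ)
    (hu : ContDiffOn ℝ 2 u (Set.Ioo a b))
    (hu' : ∀ x ∈ Set.Ioo a b, 0 < deriv u x)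
    (μ : ℝ) (hμ : μ ≠ 0)
    (k₁ k₂ : ℝ → ℝ)
    (hk₁ : ∀ x, k₁ x =
      -(1 / (2 * (m : ℝ) - 1)) *
        (1 + deriv u x ^ ((2 * (m : ℝ)) / (2 * (m : ℝ) - 1)))
          ^ (-(2 * (m : ℝ) + 1) / (2 * (m : ℝ))) *
        deriv u x ^ (-(2 * (m : ℝ) - 2) / (2 * (m : ℝ) - 1)) *
        deriv (deriv u) x)
    (hk₂ : ∀ x, k₂ x =
      -(1 / x) * (1 + deriv u x ^ ((2 * (m : ℝ)) / (2 * (m : ℝ) - 1)))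
          ^ (-(1 : ℝ) / (2 * (m : ℝ))) *
        deriv u x ^ ((1 : ℝ) / (2 * (m : ℝ) - 1))) :
    (∀ x ∈ Set.Ioo a b, k₁ x - k₂ x = μ) ↔
    ∃ c₁ : ℝ, ∀ x ∈ Set.Ioo a b,
      0 < c₁ - μ * Real.log x ∧
      x * (c₁ - μ * Real.log x) < 1 ∧
      deriv u x = x ^ (2 * m - 1) * (c₁ - μ * Real.log x) ^ (2 * m - 1) *
        (1 - x ^ (2 * m) * (c₁ - μ * Real.log x) ^ (2 * m))
          ^ (-(2 * (m : ℝ) - 1) / (2 * (m : ℝ))) :=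
  inhomogeneous_linear_Weingarten_lambda_neg_one_iff_general m hm a b hI u hu hu' μ k₁ k₂ hk₁ hk₂
end

section
/- For every integer m ≥ 2, the function ρ ↦ ρ^{2m−1} (1 − log ρ)^{2m−1} · (1 − ρ^{2m}(1 − log ρ)^{2m})^{−(2m−1)/(2m)} is not integrable on (0,1); more precisely, lim_{α→1⁻} ∫_{0}^{α} ρ^{2m−1} (1 − log ρ)^{2m−1} (1 − ρ^{2m}(1 − log ρ)^{2m})^{−(2m−1)/(2m)} dρ = ∞. (The reason is that 1 − t(1 − log t) vanishes to second order at t = 1, so the integrand blows up like (1−ρ)^{−2(2m−1)/(2m)} with exponent 2(2m−1)/(2m) > 1.) -/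
/-!
Write `t = ρ (1 - log ρ)`, so that the integrand is `t ^ (2m-1) * (1 - t ^ (2m)) ^ e` with
`e = -(2m-1)/(2m)`. On `[0, 1)` we have `ρ ≤ t < 1`, and `t` is continuous (also at `0`), so the
integrand is continuous on every `[0, α]` with `α < 1`. For `ρ ≥ 1/2`, Bernoulli's inequality and
`log ρ ≤ ρ - 1` give `1 - t ^ (2m) ≤ 2m (1 - t) ≤ 2m (1 - ρ) ^ 2`, so the integrand dominates a
multiple of `(1 - ρ) ^ (2e)`. Since `2e = -(2m-1)/m < -1`, the integrals of that comparison function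
over `(1/2, α)` diverge as `α → 1⁻`.
-/

open Real Set MeasureTheory Filter Topology

namespace Real

lemma le_mul_one_sub_log {x : ℝ} (hx0 : 0 ≤ x) (hx1 : x ≤ 1) : x ≤ x * (1 - log x) := by
  nlinarith [log_nonpos hx0 hx1]

lemma mul_one_sub_log_lt_one {x : ℝ} (hx0 : 0 ≤ x) (hx1 : x ≠ 1) : x * (1 - log x) < 1 := by
  rcases hx0.eq_or_lt with rfl | hx0
  · norm_num
  have h := log_lt_sub_one_of_pos (inv_pos.2 hx0) (inv_ne_one.2 hx1)
  rw [log_inv] at h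
  have := mul_lt_mul_of_pos_left h hx0
  rw [mul_sub, mul_inv_cancel₀ hx0.ne', mul_one] at this
  linear_combination this

lemma one_sub_mul_one_sub_log_le_sq {x : ℝ} (hx : 0 ≤ x) : 1 - x * (1 - log x) ≤ (1 - x) ^ 2 := by
  rcases hx.eq_or_lt with rfl | hx
  · norm_num
  nlinarith [mul_le_mul_of_nonneg_left (log_le_sub_one_of_pos hx) hx.le]

lemma mul_one_sub_log_mem_Ico {x : ℝ} (hx : x ∈ Ico 0 1) : x * (1 - log x) ∈ Ico 0 1 :=
  ⟨hx.1.trans (le_mul_one_sub_log hx.1 hx.2.le), mul_one_sub_log_lt_one hx.1 hx.2.ne⟩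

lemma one_sub_pow_mul_one_sub_log_pos {n : ℕ} (hn : n ≠ 0) {x : ℝ} (hx : x ∈ Ico 0 1) :
    0 < 1 - (x * (1 - log x)) ^ n := by
  have ht := mul_one_sub_log_mem_Ico hx
  linarith [pow_lt_one₀ ht.1 ht.2 hn]

lemma continuous_mul_one_sub_log : Continuous fun x : ℝ => x * (1 - log x) := by
  simp_rw [mul_one_sub]
  exact continuous_id.sub continuous_mul_log

end Real

lemma one_sub_pow_le_mul_one_sub {y : ℝ} (hy : 0 ≤ y) (n : ℕ) : 1 - y ^ n ≤ n * (1 - y) := by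
  have := one_add_mul_le_pow (a := y - 1) (by linarith) n
  rw [add_sub_cancel] at this
  linarith

lemma tendsto_integral_Ioo_sub_rpow_atTop {b c p : ℝ} (hcb : c < b) (hp : p < -1) :
    Tendsto (fun α => ∫ x in Ioo c α, (b - x) ^ p) (𝓝[<] b) atTop := by
  have hsub : Tendsto (fun α => b - α) (𝓝[<] b) (𝓝[>] 0) := by
    refine tendsto_nhdsWithin_iff.2
      ⟨?_, eventually_mem_nhdsWithin.mono fun α hα => mem_Ioi.2 (sub_pos.2 hα)⟩
    simpa using ((continuous_sub_left b).tendsto b).mono_left nhdsWithin_le_nhds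
  have hpow : Tendsto (fun α => ((b - α) ^ (p + 1) - (b - c) ^ (p + 1)) / -(p + 1))
      (𝓝[<] b) atTop :=
    (tendsto_atTop_add_const_right _ _ ((tendsto_rpow_neg_nhdsGT_zero (by linarith)).comp
      hsub)).atTop_div_const (by linarith)
  refine hpow.congr' ?_
  filter_upwards [Ioo_mem_nhdsLT hcb] with α hα
  rw [← integral_Ioc_eq_integral_Ioo, ← intervalIntegral.integral_of_le hα.1.le,
    intervalIntegral.integral_comp_sub_left (fun x => x ^ p),
    integral_rpow (Or.inr ⟨by linarith, notMem_uIcc_of_lt (by linarith [hα.2]) (by linarith)⟩),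
    div_neg, ← neg_div, neg_sub]

section Comparison

variable {f g : ℝ → ℝ} {a b c : ℝ}

lemma tendsto_integral_Ioo_atTop_of_le (hac : a ≤ c) (hf0 : ∀ x ∈ Ioo a b, 0 ≤ f x)
    (hf : ∀ α < b, IntegrableOn f (Ioo a α)) (hg0 : ∀ x ∈ Ioo c b, 0 ≤ g x)
    (hgf : ∀ x ∈ Ioo c b, g x ≤ f x)
    (hg : Tendsto (fun α => ∫ x in Ioo c α, g x) (𝓝[<] b) atTop) :
    Tendsto (fun α => ∫ x in Ioo a α, f x) (𝓝[<] b) atTop := by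
  refine tendsto_atTop_mono' _ ?_ hg
  filter_upwards [self_mem_nhdsWithin] with α (hα : α < b)
  have hca : Ioo c α ⊆ Ioo a α := Ioo_subset_Ioo_left hac
  calc ∫ x in Ioo c α, g x
      ≤ ∫ x in Ioo c α, f x :=
        integral_mono_of_nonneg
          ((ae_restrict_mem measurableSet_Ioo).mono fun x hx => hg0 x ⟨hx.1, hx.2.trans hα⟩)
          ((hf α hα).mono_set hca)
          ((ae_restrict_mem measurableSet_Ioo).mono fun x hx => hgf x ⟨hx.1, hx.2.trans hα⟩)
    _ ≤ ∫ x in Ioo a α, f x :=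
        setIntegral_mono_set (hf α hα)
          ((ae_restrict_mem measurableSet_Ioo).mono fun x hx => hf0 x ⟨hx.1, hx.2.trans hα⟩)
          hca.eventuallyLE

lemma not_integrableOn_Ioo_of_tendsto_atTop
    (h : Tendsto (fun α => ∫ x in Ioo a α, f x) (𝓝[<] b) atTop) : ¬ IntegrableOn f (Ioo a b) := by
  intro hf
  have hbdd : ∀ᶠ α in 𝓝[<] b, ∫ x in Ioo a α, f x ≤ ∫ x in Ioo a b, ‖f x‖ := by
    filter_upwards [self_mem_nhdsWithin] with α (hα : α < b)
    have hab : Ioo a α ⊆ Ioo a b := Ioo_subset_Ioo_right hα.le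
    calc ∫ x in Ioo a α, f x ≤ ∫ x in Ioo a α, ‖f x‖ :=
        (Real.le_norm_self _).trans (norm_integral_le_integral_norm _)
      _ ≤ ∫ x in Ioo a b, ‖f x‖ :=
        setIntegral_mono_set hf.norm (Eventually.of_forall fun _ => norm_nonneg _) hab.eventuallyLE
  obtain ⟨α, hle, hgt⟩ := (hbdd.and (h.eventually_gt_atTop (∫ x in Ioo a b, ‖f x‖))).exists
  exact hle.not_gt hgt

end Comparison

noncomputable def logIntegrand (k n : ℕ) (e x : ℝ) : ℝ :=
  (x * (1 - log x)) ^ k * (1 - (x * (1 - log x)) ^ n) ^ e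

section logIntegrand

variable {k n : ℕ} {e : ℝ}

lemma logIntegrand_nonneg (hn : n ≠ 0) {x : ℝ} (hx : x ∈ Ico 0 1) : 0 ≤ logIntegrand k n e x :=
  mul_nonneg (pow_nonneg (mul_one_sub_log_mem_Ico hx).1 k)
    (rpow_nonneg (one_sub_pow_mul_one_sub_log_pos hn hx).le e)

lemma continuousOn_logIntegrand (hn : n ≠ 0) :
    ContinuousOn (logIntegrand k n e) (Ico 0 1) :=
  (continuous_mul_one_sub_log.pow k).continuousOn.mul <|
    (continuous_const.sub (continuous_mul_one_sub_log.pow n)).continuousOn.rpow_const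
      fun _ hx => .inl (one_sub_pow_mul_one_sub_log_pos hn hx).ne'

lemma integrableOn_logIntegrand_Ioo (hn : n ≠ 0) {α : ℝ} (hα : α < 1) :
    IntegrableOn (logIntegrand k n e) (Ioo 0 α) :=
  (((continuousOn_logIntegrand hn).mono (Icc_subset_Ico_right hα)).integrableOn_Icc).mono_set
    Ioo_subset_Icc_self

lemma rpow_one_sub_le_logIntegrand (hn : n ≠ 0) (he : e ≤ 0) {x : ℝ} (hx : x ∈ Ico (1 / 2) 1) :
    (1 / 2) ^ k * (n : ℝ) ^ e * (1 - x) ^ (2 * e) ≤ logIntegrand k n e x := by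
  have hx0 : x ∈ Ico 0 1 := ⟨by linarith [hx.1], hx.2⟩
  have hxt : x ≤ x * (1 - log x) := le_mul_one_sub_log hx0.1 hx.2.le
  have hpos := one_sub_pow_mul_one_sub_log_pos hn hx0
  have hsq : 1 - (x * (1 - log x)) ^ n ≤ n * (1 - x) ^ 2 :=
    (one_sub_pow_le_mul_one_sub (hx0.1.trans hxt) n).trans
      (mul_le_mul_of_nonneg_left (one_sub_mul_one_sub_log_le_sq hx0.1) n.cast_nonneg)
  calc (1 / 2) ^ k * (n : ℝ) ^ e * (1 - x) ^ (2 * e)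
      = (1 / 2) ^ k * (n * (1 - x) ^ 2) ^ e := by
        rw [mul_rpow n.cast_nonneg (by positivity), rpow_mul (by linarith [hx.2]),
          rpow_two, mul_assoc]
    _ ≤ logIntegrand k n e x :=
        mul_le_mul (pow_le_pow_left₀ (by norm_num) (by linarith [hx.1]) k)
          (rpow_le_rpow_of_nonpos hpos hsq he) (rpow_nonneg (by positivity) e)
          (pow_nonneg (hx0.1.trans hxt) k)

end logIntegrand

/-- For every integer `m ≥ 2`, the function
`ρ ↦ ρ^{2m−1}(1 − log ρ)^{2m−1} (1 − ρ^{2m}(1 − log ρ)^{2m})^{−(2m−1)/(2m)}`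
is not integrable on `(0,1)`; more precisely, its integral over `(0, α)` tends to `∞`
as `α → 1⁻`. -/
theorem not_integrable_on_Ioo_zero_one (m : ℕ) (hm : 2 ≤ m)
    (f : ℝ → ℝ)
    (hf : ∀ ρ, f ρ = ρ ^ (2 * m - 1) * (1 - Real.log ρ) ^ (2 * m - 1) *
      (1 - ρ ^ (2 * m) * (1 - Real.log ρ) ^ (2 * m))
        ^ (-(2 * (m : ℝ) - 1) / (2 * (m : ℝ)))) :
    ¬ MeasureTheory.IntegrableOn f (Set.Ioo (0 : ℝ) 1) ∧
    Filter.Tendsto (fun α => ∫ ρ in Set.Ioo (0 : ℝ) α, f ρ)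
      (nhdsWithin 1 (Set.Iio 1)) Filter.atTop := by
  set e : ℝ := -(2 * (m : ℝ) - 1) / (2 * (m : ℝ)) with he
  have hm2 : (2 : ℝ) ≤ m := by exact_mod_cast hm
  have he0 : e ≤ 0 := div_nonpos_of_nonpos_of_nonneg (by linarith) (by linarith)
  have h2e : 2 * e < -1 := by
    rw [he, mul_div_assoc', div_lt_iff₀ (by linarith)]
    linarith
  have hn : 2 * m ≠ 0 := by omega
  obtain rfl : f = logIntegrand (2 * m - 1) (2 * m) e := funext fun ρ => by
    rw [hf, logIntegrand, mul_pow, mul_pow]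
  set C : ℝ := (1 / 2) ^ (2 * m - 1) * ((2 * m : ℕ) : ℝ) ^ e
  have hC : 0 < C := by positivity
  have hlim : Tendsto (fun α => ∫ ρ in Ioo 0 α, logIntegrand (2 * m - 1) (2 * m) e ρ)
      (𝓝[<] 1) atTop := by
    refine tendsto_integral_Ioo_atTop_of_le (c := 1 / 2) (g := fun x => C * (1 - x) ^ (2 * e))
      (by norm_num) (fun x hx => logIntegrand_nonneg hn (Ioo_subset_Ico_self hx))
      (fun α hα => integrableOn_logIntegrand_Ioo hn hα)
      (fun x hx => mul_nonneg hC.le (rpow_nonneg (by linarith [hx.2]) _))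
      (fun x hx => rpow_one_sub_le_logIntegrand hn he0 (Ioo_subset_Ico_self hx)) ?_
    simp_rw [integral_const_mul]
    exact (tendsto_integral_Ioo_sub_rpow_atTop (by norm_num) h2e).const_mul_atTop hC
  exact ⟨not_integrableOn_Ioo_of_tendsto_atTop hlim, hlim⟩
end
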